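/- arXiv:2604.09033 — 2 statements merged into one kernel-verified Lean document; each statement's English description precedes it below -/
import Mathlib

section
/- Let A ∈ ℛ be a fixed set, and let Z^{(1)},…,Z^{(n)} be i.i.d. copies of a nonnegative random vector Z with distribution V ∈ 𝓢_A. Then for every ε > 0 there exists a constant C_ε > 0 such that P(Z^{(1)} + ⋯ + Z^{(n)} ∈ xA) ≤ C_ε (1+ε)^n P(Z ∈ xA) for all x > 0 and all n ∈ ℕ. -/
open MeasureTheory ProbabilityTheory Filter Set Asymptotics
open scoped Topology ENNReal Pointwise

noncomputable section

/-- The (real-valued) tail function `B̄(x) = B((x, ∞))` of a measure on `ℝ`. -/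
def rtail (μ : Measure ℝ) (x : ℝ) : ℝ := (μ (Set.Ioi x)).toReal

/-- Convolution of two distributions on `ℝ`: the distribution of the sum of two
independent random variables. -/
def conv1 (μ ν : Measure ℝ) : Measure ℝ := (μ.prod ν).map fun p => p.1 + p.2

/-- A distribution on `ℝ` has unbounded support from above. -/
def UnbddTail (μ : Measure ℝ) : Prop := ∀ x : ℝ, 0 < μ (Set.Ioi x)

/-- The class `𝒮` of subexponential distributions on `ℝ`. -/
def Subexp (μ : Measure ℝ) : Prop :=
  UnbddTail μ ∧ Tendsto (fun x => rtail (conv1 μ μ) x / rtail μ x) atTop (𝓝 2)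

/-- The class `𝓛` of long-tailed distributions on `ℝ`. -/
def LongTailed (μ : Measure ℝ) : Prop :=
  UnbddTail μ ∧ ∀ y : ℝ, 0 < y →
    Tendsto (fun x => rtail μ (x - y) / rtail μ x) atTop (𝓝 1)

/-- `B̄*(v) = limsup_{x→∞} B̄(vx)/B̄(x)`. -/
def starTail (μ : Measure ℝ) (v : ℝ) : ℝ :=
  limsup (fun x => rtail μ (v * x) / rtail μ x) atTop

/-- The lower Karamata index `K_μ⁻ = -lim_{v↓1} log B̄*(v)/log v` is at least `K`
(allowing the value `+∞` for the index). -/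
def KGe (μ : Measure ℝ) (K : ℝ) : Prop :=
  Tendsto (fun v => -(Real.log (starTail μ v) / Real.log v)) (𝓝[>] (1 : ℝ)) atTop ∨
    ∃ K' : ℝ, K ≤ K' ∧
      Tendsto (fun v => -(Real.log (starTail μ v) / Real.log v)) (𝓝[>] (1 : ℝ)) (𝓝 K')

/-- The lower Karamata index of `μ` is positive. -/
def KPos (μ : Measure ℝ) : Prop := ∃ K : ℝ, 0 < K ∧ KGe μ K

/-- The class `𝓐* = 𝒮 ∩ {K⁻ > 0}`. -/
def AStar (μ : Measure ℝ) : Prop := Subexp μ ∧ KPos μ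

/-- The class `𝒯* = 𝓛 ∩ {K⁻ > 0}`. -/
def TStar (μ : Measure ℝ) : Prop := LongTailed μ ∧ KPos μ

/-- `f(x) ∼ g(x)` as `x → ∞`. -/
def asympEquiv (f g : ℝ → ℝ) : Prop := Tendsto (fun x => f x / g x) atTop (𝓝 1)

/-- Weak tail equivalence `f(x) ≍ g(x)` as `x → ∞`. -/
def weakEquiv (f g : ℝ → ℝ) : Prop := (f =O[atTop] g) ∧ (g =O[atTop] f)

/-- The family `ℛ` of rare sets: proper subsets of `ℝ^d` that are open, increasing,
have convex complement and whose closure avoids the origin. -/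
def IsRareSet (d : ℕ) (A : Set (Fin d → ℝ)) : Prop :=
  A ≠ Set.univ ∧ IsOpen A ∧
    (∀ z ∈ A, ∀ y : Fin d → ℝ, 0 ≤ y → z + y ∈ A) ∧
    Convex ℝ Aᶜ ∧ (0 : Fin d → ℝ) ∉ closure A

/-- `Z_A = sup {u > 0 : Z ∈ uA}` (with `sup ∅ = 0`). -/
def projA {d : ℕ} (A : Set (Fin d → ℝ)) (z : Fin d → ℝ) : ℝ :=
  sSup {u : ℝ | 0 < u ∧ z ∈ u • A}

/-- The distribution `V_A` of `Z_A` where `Z ∼ V`. -/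
def distA {d : ℕ} (V : Measure (Fin d → ℝ)) (A : Set (Fin d → ℝ)) : Measure ℝ :=
  V.map (projA A)

/-- Multivariate subexponentiality on `A`: `V ∈ 𝒮_A` iff `V_A ∈ 𝒮`. -/
def SubexpA {d : ℕ} (V : Measure (Fin d → ℝ)) (A : Set (Fin d → ℝ)) : Prop :=
  Subexp (distA V A)

/-- `V ∈ 𝓛_A` iff `V_A ∈ 𝓛`. -/
def LongTailedA {d : ℕ} (V : Measure (Fin d → ℝ)) (A : Set (Fin d → ℝ)) : Prop :=
  LongTailed (distA V A)

/-- `V ∈ 𝓐*_A` iff `V_A ∈ 𝓐*`. -/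
def AStarA {d : ℕ} (V : Measure (Fin d → ℝ)) (A : Set (Fin d → ℝ)) : Prop :=
  AStar (distA V A)

/-- Convolution of two multivariate distributions: distribution of the sum of
independent random vectors. -/
def convd {d : ℕ} (V W : Measure (Fin d → ℝ)) : Measure (Fin d → ℝ) :=
  (V.prod W).map fun p => p.1 + p.2

section AuxKesten

variable {d : ℕ} {A : Set (Fin d → ℝ)}

lemma projA_nonneg (z : Fin d → ℝ) : 0 ≤ projA A z :=
  Real.sSup_nonneg (fun u hu => hu.1.le)

lemma rare_zero_not_mem (hA : IsRareSet d A) : (0 : Fin d → ℝ) ∉ A :=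
  fun h => hA.2.2.2.2 (subset_closure h)

lemma rare_exists_delta (hA : IsRareSet d A) :
    ∃ δ : ℝ, 0 < δ ∧ ∀ a ∈ A, δ ≤ ‖a‖ := by
  have h := hA.2.2.2.2
  rw [Metric.mem_closure_iff] at h
  push_neg at h
  obtain ⟨δ, hδ, hball⟩ := h
  exact ⟨δ, hδ, fun a ha => by
    have := hball a ha
    rwa [dist_comm, dist_zero_right] at this⟩

lemma bddAbove_projA_set (hA : IsRareSet d A) (z : Fin d → ℝ) :
    BddAbove {u : ℝ | 0 < u ∧ z ∈ u • A} := by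
  obtain ⟨δ, hδ, hd⟩ := rare_exists_delta hA
  refine ⟨‖z‖ / δ, fun u hu => ?_⟩
  obtain ⟨hu0, a, ha, rfl⟩ := hu
  rw [norm_smul, Real.norm_of_nonneg hu0.le]
  rw [le_div_iff₀ hδ]
  exact mul_le_mul_of_nonneg_left (hd a ha) hu0.le

lemma le_projA_of_mem (hA : IsRareSet d A) {z : Fin d → ℝ} {u : ℝ}
    (hu : 0 < u) (h : z ∈ u • A) : u ≤ projA A z :=
  le_csSup (bddAbove_projA_set hA z) ⟨hu, h⟩

lemma rare_smul_mem (hA : IsRareSet d A) {a : Fin d → ℝ} (ha : a ∈ A)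
    {c : ℝ} (hc : 1 ≤ c) : c • a ∈ A := by
  by_contra h
  have h0 : (0 : Fin d → ℝ) ∈ Aᶜ := rare_zero_not_mem hA
  have hc0 : 0 < c := lt_of_lt_of_le one_pos hc
  have hb : (0:ℝ) ≤ 1 - c⁻¹ := by
    rw [sub_nonneg]
    exact inv_le_one_of_one_le₀ hc
  have hcvx : c⁻¹ • (c • a) + (1 - c⁻¹) • (0 : Fin d → ℝ) ∈ Aᶜ :=
    hA.2.2.2.1 h h0 (by positivity) hb (by ring)
  rw [smul_smul, inv_mul_cancel₀ hc0.ne', one_smul, smul_zero, add_zero] at hcvx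
  exact hcvx ha

/-- scaling monotonicity : u • A ⊆ x • A for 0 < x ≤ u -/
lemma rare_smul_subset (hA : IsRareSet d A) {x u : ℝ} (hx : 0 < x) (hxu : x ≤ u) :
    u • A ⊆ x • A := by
  rintro _ ⟨a, ha, rfl⟩
  refine ⟨(u / x) • a, rare_smul_mem hA ha ((one_le_div hx).2 hxu), ?_⟩
  show x • ((u / x) • a) = u • a
  rw [smul_smul]
  congr 1
  field_simp

lemma projA_gt_of_mem_smul (hA : IsRareSet d A) {x : ℝ} {z : Fin d → ℝ}
    (hx : 0 < x) (h : z ∈ x • A) : x < projA A z := by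
  have hmem : x⁻¹ • z ∈ A := by
    rwa [← mem_smul_set_iff_inv_smul_mem₀ hx.ne']
  have hcont : ContinuousAt (fun u : ℝ => u⁻¹ • z) x := by
    exact (continuousAt_inv₀ hx.ne').smul continuousAt_const
  have hev : ∀ᶠ u in 𝓝 x, u⁻¹ • z ∈ A := hcont.eventually_mem (hA.2.1.mem_nhds hmem)
  have : ∀ᶠ u in 𝓝[>] x, u⁻¹ • z ∈ A := nhdsWithin_le_nhds hev
  obtain ⟨u, hu, hux⟩ := (this.and self_mem_nhdsWithin).exists
  have : u ≤ projA A z :=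
    le_projA_of_mem hA (hx.trans hux) ((mem_smul_set_iff_inv_smul_mem₀ (hx.trans hux).ne' _ _).2 hu)
  exact lt_of_lt_of_le hux this

lemma mem_smul_of_projA_gt (hA : IsRareSet d A) {x : ℝ} {z : Fin d → ℝ}
    (hx : 0 < x) (h : x < projA A z) : z ∈ x • A := by
  have hne : {u : ℝ | 0 < u ∧ z ∈ u • A}.Nonempty := by
    by_contra hne
    rw [not_nonempty_iff_eq_empty] at hne
    rw [projA, hne, Real.sSup_empty] at h
    exact absurd h (not_lt.2 hx.le)
  obtain ⟨u, ⟨hu0, hu⟩, hxu⟩ := exists_lt_of_lt_csSup hne h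
  exact rare_smul_subset hA hx hxu.le hu

lemma projA_preimage_Ioi (hA : IsRareSet d A) {x : ℝ} (hx : 0 < x) :
    projA A ⁻¹' Set.Ioi x = x • A := by
  ext z
  exact ⟨fun h => mem_smul_of_projA_gt hA hx h, fun h => projA_gt_of_mem_smul hA hx h⟩

lemma measurable_projA (hA : IsRareSet d A) : Measurable (projA A) := by
  apply measurable_of_Ioi
  intro x
  rcases lt_or_ge x 0 with hx | hx
  · have : projA A ⁻¹' Set.Ioi x = Set.univ := by
      ext z; simp only [mem_preimage, mem_Ioi, mem_univ, iff_true]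
      exact lt_of_lt_of_le hx (projA_nonneg z)
    rw [this]; exact MeasurableSet.univ
  · have : projA A ⁻¹' Set.Ioi x = ⋃ (u : ℝ) (_ : x < u), u • A := by
      ext z
      simp only [mem_preimage, mem_Ioi, mem_iUnion]
      constructor
      · intro h
        have hne : {u : ℝ | 0 < u ∧ z ∈ u • A}.Nonempty := by
          by_contra hne
          rw [not_nonempty_iff_eq_empty] at hne
          rw [projA, hne, Real.sSup_empty] at h
          exact absurd h (not_lt.2 hx)
        obtain ⟨u, ⟨hu0, hu⟩, hxu⟩ := exists_lt_of_lt_csSup hne h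
        exact ⟨u, hxu, hu⟩
      · rintro ⟨u, hxu, hu⟩
        exact lt_of_lt_of_le hxu (le_projA_of_mem hA (lt_of_le_of_lt hx hxu) hu)
    rw [this]
    exact (isOpen_iUnion fun u => isOpen_iUnion fun hu =>
      hA.2.1.smul₀ (lt_of_le_of_lt hx hu).ne').measurableSet

lemma projA_zero (hA : IsRareSet d A) : projA A 0 = 0 := by
  have : {u : ℝ | 0 < u ∧ (0 : Fin d → ℝ) ∈ u • A} = ∅ := by
    ext u
    simp only [mem_setOf_eq, mem_empty_iff_false, iff_false, not_and]
    intro hu h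
    rw [mem_smul_set_iff_inv_smul_mem₀ hu.ne', smul_zero] at h
    exact rare_zero_not_mem hA h
  rw [projA, this, Real.sSup_empty]

lemma projA_add_le (hA : IsRareSet d A) (z₁ z₂ : Fin d → ℝ) :
    projA A (z₁ + z₂) ≤ projA A z₁ + projA A z₂ := by
  set p₁ := projA A z₁
  set p₂ := projA A z₂
  apply Real.sSup_le _ (add_nonneg (projA_nonneg z₁) (projA_nonneg z₂))
  rintro u ⟨hu0, hu⟩
  by_contra hgt
  push_neg at hgt
  set δ := (u - p₁ - p₂) / 2 with hδdef
  have hδ : 0 < δ := by simp only [hδdef]; linarith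
  set s := p₁ + δ with hs
  set t := p₂ + δ with ht
  have hs0 : 0 < s := by have := projA_nonneg (A := A) z₁; simp only [hs]; linarith
  have ht0 : 0 < t := by have := projA_nonneg (A := A) z₂; simp only [ht]; linarith
  have hst : s + t = u := by simp only [hs, ht, hδdef]; ring
  have h₁ : s⁻¹ • z₁ ∈ Aᶜ := by
    intro hin
    have : z₁ ∈ s • A := (mem_smul_set_iff_inv_smul_mem₀ hs0.ne' _ _).2 hin
    have := le_projA_of_mem hA hs0 this
    simp only [hs] at this; linarith
  have h₂ : t⁻¹ • z₂ ∈ Aᶜ := by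
    intro hin
    have : z₂ ∈ t • A := (mem_smul_set_iff_inv_smul_mem₀ ht0.ne' _ _).2 hin
    have := le_projA_of_mem hA ht0 this
    simp only [ht] at this; linarith
  have hcvx := hA.2.2.2.1 h₁ h₂ (by positivity : (0:ℝ) ≤ s / u) (by positivity : (0:ℝ) ≤ t / u)
    (by field_simp; exact hst)
  have heq : (s / u) • s⁻¹ • z₁ + (t / u) • t⁻¹ • z₂ = u⁻¹ • (z₁ + z₂) := by
    rw [smul_smul, smul_smul, smul_add]
    congr 1 <;> congr 1 <;> field_simp <;> ring
  rw [heq] at hcvx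
  exact hcvx ((mem_smul_set_iff_inv_smul_mem₀ hu0.ne' _ _).1 hu)

lemma projA_sum_le (hA : IsRareSet d A) (z : ℕ → Fin d → ℝ) (k : ℕ) :
    projA A (∑ i ∈ Finset.range k, z i) ≤ ∑ i ∈ Finset.range k, projA A (z i) := by
  induction k with
  | zero => simp [projA_zero hA]
  | succ n ih =>
    rw [Finset.sum_range_succ, Finset.sum_range_succ]
    exact le_trans (projA_add_le hA _ _) (by linarith [ih])

lemma kesten1d {Ω : Type} [MeasurableSpace Ω] (P : Measure Ω) [IsProbabilityMeasure P]
    (W : ℕ → Ω → ℝ) (B : Measure ℝ)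
    (measW : ∀ i, Measurable (W i)) (nonnegW : ∀ i ω, 0 ≤ W i ω)
    (distW : ∀ i, P.map (W i) = B)
    (indep : iIndepFun W P)
    (hB : Subexp B) (ε : ℝ) (hε : 0 < ε) :
    ∃ C : ℝ, 0 < C ∧ ∀ x : ℝ, ∀ k : ℕ, 0 < k →
      P {ω | x < ∑ i ∈ Finset.range k, W i ω} ≤
        ENNReal.ofReal (C * (1 + ε) ^ k) * B (Set.Ioi x) := by
  haveI hBprob : IsProbabilityMeasure B := by
    rw [← distW 0]; exact Measure.isProbabilityMeasure_map (measW 0).aemeasurable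
  haveI hCprob : IsProbabilityMeasure (conv1 B B) := by
    unfold conv1
    exact Measure.isProbabilityMeasure_map (measurable_fst.add measurable_snd).aemeasurable
  -- B has no mass on negatives
  have hBneg : B (Set.Iio 0) = 0 := by
    rw [← distW 0, Measure.map_apply (measW 0) measurableSet_Iio]
    convert measure_empty
    · ext ω; simp [not_lt.2 (nonnegW 0 ω)]
    · infer_instance
  have rtailpos : ∀ x, 0 < rtail B x :=
    fun x => ENNReal.toReal_pos (hB.1 x).ne' (measure_ne_top B _)
  have hBIoi : ∀ x : ℝ, B (Set.Ioi x) = ENNReal.ofReal (rtail B x) :=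
    fun x => (ENNReal.ofReal_toReal (measure_ne_top B _)).symm
  -- choose T from subexponentiality
  obtain ⟨T, hT⟩ := eventually_atTop.1 (hB.2.eventually_lt_const (by linarith : (2:ℝ) < 2 + ε))
  -- the midterm set and its bound
  set E : ℝ → Set (ℝ × ℝ) := fun x => {p : ℝ × ℝ | x < p.1 + p.2 ∧ p.1 ≤ x} with hEdef
  have hE : ∀ x, MeasurableSet (E x) := by
    intro x
    exact ((measurableSet_lt measurable_const (measurable_fst.add measurable_snd)).inter
      (measurableSet_le measurable_fst measurable_const))
  have hconv : ∀ x : ℝ, conv1 B B (Set.Ioi x) = (B.prod B) {p : ℝ × ℝ | x < p.1 + p.2} := by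
    intro x
    rw [conv1, Measure.map_apply (f := fun p : ℝ × ℝ => p.1 + p.2) (measurable_fst.add measurable_snd) measurableSet_Ioi]
    rfl
  have hsecond : ∀ x : ℝ, (B.prod B) {p : ℝ × ℝ | x < p.1 + p.2 ∧ x < p.1} = B (Set.Ioi x) := by
    intro x
    have hIoiuniv : (B.prod B) (Set.Ioi x ×ˢ Set.univ) = B (Set.Ioi x) := by
      rw [Measure.prod_prod, measure_univ, mul_one]
    apply le_antisymm
    · rw [← hIoiuniv]
      apply measure_mono
      rintro ⟨a, b⟩ ⟨-, h2⟩
      exact ⟨h2, mem_univ _⟩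
    · rw [← hIoiuniv]
      have hsub : Set.Ioi x ×ˢ Set.univ ⊆
          {p : ℝ × ℝ | x < p.1 + p.2 ∧ x < p.1} ∪ {p : ℝ × ℝ | p.2 < 0} := by
        rintro ⟨a, b⟩ ⟨ha, -⟩
        rcases lt_or_ge b 0 with hb | hb
        · exact Or.inr hb
        · exact Or.inl ⟨by dsimp at ha ⊢; linarith [Set.mem_Ioi.1 ha], ha⟩
      refine le_trans (measure_mono hsub) (le_trans (measure_union_le _ _) ?_)
      have : (B.prod B) {p : ℝ × ℝ | p.2 < 0} = 0 := by
        have : {p : ℝ × ℝ | p.2 < 0} = Set.univ ×ˢ Set.Iio 0 := by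
          ext ⟨a, b⟩; simp
        rw [this, Measure.prod_prod, hBneg, mul_zero]
      rw [this, add_zero]
  have hsplit : ∀ x : ℝ, (B.prod B) (E x) + B (Set.Ioi x) = conv1 B B (Set.Ioi x) := by
    intro x
    rw [hconv x, ← hsecond x]
    have hm2 : MeasurableSet {p : ℝ × ℝ | x < p.1 + p.2 ∧ x < p.1} :=
      (measurableSet_lt measurable_const (measurable_fst.add measurable_snd)).inter
        (measurableSet_lt measurable_const measurable_fst)
    have hdisj : Disjoint (E x) {p : ℝ × ℝ | x < p.1 + p.2 ∧ x < p.1} := by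
      rw [Set.disjoint_left]
      rintro ⟨a, b⟩ ⟨h1, h2⟩ ⟨h3, h4⟩
      exact absurd h4 (not_lt.2 h2)
    have hunion : E x ∪ {p : ℝ × ℝ | x < p.1 + p.2 ∧ x < p.1} =
        {p : ℝ × ℝ | x < p.1 + p.2} := by
      ext ⟨a, b⟩
      simp only [hEdef, Set.mem_union, Set.mem_setOf_eq]
      constructor
      · rintro (⟨h1, h2⟩ | ⟨h1, h2⟩) <;> exact h1
      · intro h
        rcases le_or_gt a x with ha | ha
        · exact Or.inl ⟨h, ha⟩
        · exact Or.inr ⟨h, ha⟩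
    rw [← hunion, measure_union hdisj hm2]
  have hmid : ∀ x : ℝ, T ≤ x →
      (B.prod B) (E x) ≤ ENNReal.ofReal (1 + ε) * B (Set.Ioi x) := by
    intro x hx
    have h1 : conv1 B B (Set.Ioi x) ≤ ENNReal.ofReal ((2 + ε) * rtail B x) := by
      have h2 : rtail (conv1 B B) x ≤ (2 + ε) * rtail B x := by
        have := hT x hx
        rw [div_lt_iff₀ (rtailpos x)] at this
        linarith
      calc conv1 B B (Set.Ioi x) = ENNReal.ofReal (rtail (conv1 B B) x) :=
            (ENNReal.ofReal_toReal (measure_ne_top _ _)).symm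
        _ ≤ ENNReal.ofReal ((2 + ε) * rtail B x) := ENNReal.ofReal_le_ofReal h2
    have h3 : ENNReal.ofReal ((2 + ε) * rtail B x) =
        ENNReal.ofReal (1 + ε) * B (Set.Ioi x) + B (Set.Ioi x) := by
      rw [hBIoi x, ← ENNReal.ofReal_mul (by linarith : (0:ℝ) ≤ 1 + ε),
        ← ENNReal.ofReal_add (mul_nonneg (by linarith) (rtailpos x).le) (rtailpos x).le]
      congr 1
      ring
    rw [← hsplit x, h3] at h1
    exact (ENNReal.add_le_add_iff_right (measure_ne_top B _)).1 h1
  -- constants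
  set β : ℝ := (rtail B T)⁻¹ with hβdef
  have hβ : 0 < β := inv_pos.2 (rtailpos T)
  set M : ℝ := 1 + β + 1 / ε with hMdef
  have hM : 0 < M := by positivity
  set c : ℕ → ℝ := fun k => M * (1 + ε) ^ k - 1 / ε with hcdef
  have hcge : ∀ k : ℕ, 1 + β ≤ c k := by
    intro k
    have h1 : (1:ℝ) ≤ (1 + ε) ^ k := one_le_pow₀ (by linarith)
    have : M ≤ M * (1 + ε) ^ k := le_mul_of_one_le_right hM.le h1
    simp only [hcdef, hMdef] at *
    linarith
  have hcpos : ∀ k, 0 < c k := fun k => lt_of_lt_of_le (by linarith) (hcge k)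
  -- sums
  set S : ℕ → Ω → ℝ := fun k ω => ∑ i ∈ Finset.range k, W i ω with hSdef
  have measS : ∀ k, Measurable (S k) := fun k => Finset.measurable_sum _ fun i _ => measW i
  -- main induction
  have main : ∀ k : ℕ, ∀ x : ℝ,
      P {ω | x < S (k + 1) ω} ≤ ENNReal.ofReal (c (k + 1)) * B (Set.Ioi x) := by
    intro k
    induction k with
    | zero =>
      intro x
      have hset : {ω | x < S 1 ω} = W 0 ⁻¹' Set.Ioi x := by
        ext ω; simp [hSdef, Finset.sum_range_one]
      rw [hset, ← Measure.map_apply (measW 0) measurableSet_Ioi, distW 0]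
      have h1 : (1:ℝ≥0∞) ≤ ENNReal.ofReal (c 1) := by
        rw [ENNReal.one_le_ofReal]
        linarith [hcge 1]
      exact le_mul_of_one_le_left (by positivity) h1
    | succ k ih =>
      intro x
      rcases lt_or_ge x T with hxT | hxT
      · -- small x : use the trivial bound
        calc P {ω | x < S (k + 2) ω} ≤ 1 := prob_le_one
          _ ≤ ENNReal.ofReal (β * rtail B x) := by
              refine ENNReal.one_le_ofReal.2 ?_
              have hmono : rtail B T ≤ rtail B x :=
                ENNReal.toReal_mono (measure_ne_top B _) (measure_mono (Set.Ioi_subset_Ioi hxT.le))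
              calc (1:ℝ) = β * rtail B T := by
                    rw [hβdef, inv_mul_cancel₀ (rtailpos T).ne']
                _ ≤ β * rtail B x := by
                    exact mul_le_mul_of_nonneg_left hmono hβ.le
          _ ≤ ENNReal.ofReal (c (k + 2) * rtail B x) := by
              apply ENNReal.ofReal_le_ofReal
              apply mul_le_mul_of_nonneg_right _ (rtailpos x).le
              linarith [hcge (k + 2)]
          _ = ENNReal.ofReal (c (k + 2)) * B (Set.Ioi x) := by
              rw [ENNReal.ofReal_mul (hcpos (k + 2)).le, hBIoi x]
      · -- large x
        have hsubset : {ω | x < S (k + 2) ω} ⊆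
            (W (k + 1) ⁻¹' Set.Ioi x) ∪
              {ω | x < W (k + 1) ω + S (k + 1) ω ∧ W (k + 1) ω ≤ x} := by
          intro ω hω
          have hsum : S (k + 2) ω = S (k + 1) ω + W (k + 1) ω := by
            simp only [hSdef]
            exact Finset.sum_range_succ _ _
          rw [Set.mem_setOf_eq, hsum] at hω
          rcases le_or_gt (W (k + 1) ω) x with hw | hw
          · exact Or.inr ⟨by linarith, hw⟩
          · exact Or.inl hw
        have step1 : P {ω | x < S (k + 2) ω} ≤
            P (W (k + 1) ⁻¹' Set.Ioi x) +
              P {ω | x < W (k + 1) ω + S (k + 1) ω ∧ W (k + 1) ω ≤ x} :=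
          le_trans (measure_mono hsubset) (measure_union_le _ _)
        have hW : P (W (k + 1) ⁻¹' Set.Ioi x) = B (Set.Ioi x) := by
          rw [← Measure.map_apply (measW (k + 1)) measurableSet_Ioi, distW (k + 1)]
        -- the middle term via independence
        have hindep : IndepFun (W (k + 1)) (S (k + 1)) P := by
          have h := (indep.indepFun_sum_range_succ measW (k + 1)).symm
          have hSe : S (k + 1) = ∑ j ∈ Finset.range (k + 1), W j := by
            ext ω; simp [hSdef, Finset.sum_apply]
          rwa [hSe]
        have hmap : P.map (fun ω => (W (k + 1) ω, S (k + 1) ω)) =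
            B.prod (P.map (S (k + 1))) := by
          rw [← distW (k + 1)]
          exact (indepFun_iff_map_prod_eq_prod_map_map (measW (k + 1)).aemeasurable
            (measS (k + 1)).aemeasurable).1 hindep
        have hmidapply : P {ω | x < W (k + 1) ω + S (k + 1) ω ∧ W (k + 1) ω ≤ x} =
            (B.prod (P.map (S (k + 1)))) (E x) := by
          rw [← hmap, Measure.map_apply ((measW (k + 1)).prodMk (measS (k + 1))) (hE x)]
          rfl
        have hinner : ∀ w : ℝ, (P.map (S (k + 1))) (Prod.mk w ⁻¹' E x) ≤
            ENNReal.ofReal (c (k + 1)) * B (Prod.mk w ⁻¹' E x) := by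
          intro w
          rcases le_or_gt w x with hw | hw
          · have hpre : Prod.mk w ⁻¹' E x = Set.Ioi (x - w) := by
              ext y
              simp only [hEdef, Set.mem_preimage, Set.mem_setOf_eq, Set.mem_Ioi]
              constructor
              · rintro ⟨h1, -⟩; linarith
              · intro h; exact ⟨by linarith, hw⟩
            rw [hpre, Measure.map_apply (measS (k + 1)) measurableSet_Ioi]
            exact ih (x - w)
          · have hpre : Prod.mk w ⁻¹' E x = ∅ := by
              ext y
              simp only [hEdef, Set.mem_preimage, Set.mem_setOf_eq, Set.mem_empty_iff_false,
                iff_false, not_and]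
              intro h; linarith
            rw [hpre]
            simp
        have hmidbound : (B.prod (P.map (S (k + 1)))) (E x) ≤
            ENNReal.ofReal (c (k + 1)) * ((B.prod B) (E x)) := by
          rw [Measure.prod_apply (hE x), Measure.prod_apply (hE x)]
          rw [← lintegral_const_mul _ (measurable_measure_prodMk_left (hE x))]
          exact lintegral_mono hinner
        have hfinal : P {ω | x < S (k + 2) ω} ≤
            B (Set.Ioi x) + ENNReal.ofReal (c (k + 1)) *
              (ENNReal.ofReal (1 + ε) * B (Set.Ioi x)) := by
          refine le_trans step1 ?_
          rw [hW, hmidapply]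
          gcongr
          exact le_trans hmidbound (by gcongr; exact hmid x hxT)
        have harith : c (k + 2) = 1 + (1 + ε) * c (k + 1) := by
          simp only [hcdef]
          field_simp
          ring
        calc P {ω | x < S (k + 2) ω} ≤
            B (Set.Ioi x) + ENNReal.ofReal (c (k + 1)) *
              (ENNReal.ofReal (1 + ε) * B (Set.Ioi x)) := hfinal
          _ = ENNReal.ofReal (c (k + 2)) * B (Set.Ioi x) := by
              rw [harith]
              rw [show ENNReal.ofReal (1 + (1 + ε) * c (k + 1)) =
                  1 + ENNReal.ofReal (c (k + 1)) * ENNReal.ofReal (1 + ε) by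
                rw [ENNReal.ofReal_add (by norm_num) (mul_nonneg (by linarith) (hcpos _).le),
                  ENNReal.ofReal_one, ENNReal.ofReal_mul (by linarith : (0:ℝ) ≤ 1 + ε)]
                ring]
              rw [add_mul, one_mul, mul_assoc]
  refine ⟨M, hM, fun x k hk => ?_⟩
  obtain ⟨n, rfl⟩ := Nat.exists_eq_succ_of_ne_zero hk.ne'
  refine le_trans (main n x) ?_
  gcongr
  simp only [hcdef, Nat.succ_eq_add_one]
  have : 0 < 1 / ε := by positivity
  linarith

end AuxKesten

/-- Lemma 3.2 (multivariate Kesten inequality). -/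
theorem statement15 {d : ℕ} {Ω : Type} [MeasurableSpace Ω] {P : Measure Ω}
    [IsProbabilityMeasure P] {A : Set (Fin d → ℝ)} (hA : IsRareSet d A)
    (Z : ℕ → Ω → (Fin d → ℝ)) (V : Measure (Fin d → ℝ))
    (measZ : ∀ i, Measurable (Z i)) (nonnegZ : ∀ i ω, 0 ≤ Z i ω)
    (distZ : ∀ i, P.map (Z i) = V)
    (indep : iIndepFun Z P)
    (hV : SubexpA V A) :
    ∀ ε : ℝ, 0 < ε → ∃ C : ℝ, 0 < C ∧ ∀ x : ℝ, 0 < x → ∀ k : ℕ, 0 < k →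
      (P {ω | (∑ i ∈ Finset.range k, Z i ω) ∈ x • A}).toReal ≤
        C * (1 + ε) ^ k * (V (x • A)).toReal := by
  intro ε hε
  set W : ℕ → Ω → ℝ := fun i ω => projA A (Z i ω) with hWdef
  have measW : ∀ i, Measurable (W i) := fun i => (measurable_projA hA).comp (measZ i)
  have distW : ∀ i, P.map (W i) = distA V A := by
    intro i
    rw [distA, ← distZ i, Measure.map_map (measurable_projA hA) (measZ i)]
    rfl
  have indepW : iIndepFun W P :=
    indep.comp (fun _ => projA A) (fun _ => measurable_projA hA)
  obtain ⟨C, hC, hbound⟩ := kesten1d P W (distA V A) measW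
    (fun i ω => projA_nonneg _) distW indepW hV ε hε
  haveI : IsProbabilityMeasure V := by
    rw [← distZ 0]; exact Measure.isProbabilityMeasure_map (measZ 0).aemeasurable
  haveI : IsProbabilityMeasure (distA V A) := by
    rw [distA]; exact Measure.isProbabilityMeasure_map (measurable_projA hA).aemeasurable
  refine ⟨C, hC, fun x hx k hk => ?_⟩
  have hsub : {ω | (∑ i ∈ Finset.range k, Z i ω) ∈ x • A} ⊆
      {ω | x < ∑ i ∈ Finset.range k, W i ω} := by
    intro ω hω
    have h1 : x < projA A (∑ i ∈ Finset.range k, Z i ω) :=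
      projA_gt_of_mem_smul hA hx hω
    have h2 := projA_sum_le hA (fun i => Z i ω) k
    exact lt_of_lt_of_le h1 (le_trans h2 (le_of_eq rfl))
  have hVx : V (x • A) = (distA V A) (Set.Ioi x) := by
    rw [distA, Measure.map_apply (measurable_projA hA) measurableSet_Ioi,
      projA_preimage_Ioi hA hx]
  calc (P {ω | (∑ i ∈ Finset.range k, Z i ω) ∈ x • A}).toReal
      ≤ (P {ω | x < ∑ i ∈ Finset.range k, W i ω}).toReal :=
        ENNReal.toReal_mono (measure_ne_top P _) (measure_mono hsub)
    _ ≤ (ENNReal.ofReal (C * (1 + ε) ^ k) * (distA V A) (Set.Ioi x)).toReal :=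
        ENNReal.toReal_mono
          (ENNReal.mul_ne_top ENNReal.ofReal_ne_top (measure_ne_top _ _))
          (hbound x k hk)
    _ = C * (1 + ε) ^ k * (V (x • A)).toReal := by
        rw [hVx, ENNReal.toReal_mul, ENNReal.toReal_ofReal (by positivity)]
end
end

section
/- Let A ∈ ℛ be a fixed set, and let {Z^{(i)}, i ≥ 1} be i.i.d. copies of a nonnegative random vector Z with distribution V ∈ 𝓢_A. Let {τ_i, i ≥ 1} be the arrival times of a renewal counting process N(t) = sup{i : τ_i ≤ t} with finite renewal function λ(t) = Σ_{i≥1} P(τ_i ≤ t), independent of {Z^{(i)}}. Let r ≥ 0 and fix T ∈ Λ = {t : λ(t) > 0}. Then lim_{N→∞} sup_{t∈Λ_T} sup_{x≥0} [Σ_{n=N+1}^{∞} Σ_{i=1}^{n} P(Z^{(i)} e^{−rτ_i} ∈ xA, N(t) = n)] / [∫_0^t P(Z ∈ x e^{rs} A) λ(ds)] = 0, where Λ_T = [0,T] ∩ Λ. -/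
open MeasureTheory ProbabilityTheory Filter Set Asymptotics
open scoped Topology ENNReal Pointwise

noncomputable section

/-- Index type labelling all sources of randomness of the delayed renewal risk model:
main claims `X`, delayed claims `Y`, numbers of delayed claims `M`, delays `D`,
inter-arrival times `θ`. -/
abbrev ModelIdx : Type := (ℕ ⊕ (ℕ × ℕ)) ⊕ (ℕ ⊕ ((ℕ × ℕ) ⊕ ℕ))

/-- Codomains of the random elements of the model. -/
def ModelCod (d : ℕ) : ModelIdx → Type
  | Sum.inl (Sum.inl _) => Fin d → ℝ
  | Sum.inl (Sum.inr _) => Fin d → ℝ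
  | Sum.inr (Sum.inl _) => ℕ
  | Sum.inr (Sum.inr (Sum.inl _)) => ℝ
  | Sum.inr (Sum.inr (Sum.inr _)) => ℝ

instance modelCodMS (d : ℕ) : ∀ i : ModelIdx, MeasurableSpace (ModelCod d i)
  | Sum.inl (Sum.inl _) => inferInstanceAs (MeasurableSpace (Fin d → ℝ))
  | Sum.inl (Sum.inr _) => inferInstanceAs (MeasurableSpace (Fin d → ℝ))
  | Sum.inr (Sum.inl _) => inferInstanceAs (MeasurableSpace ℕ)
  | Sum.inr (Sum.inr (Sum.inl _)) => inferInstanceAs (MeasurableSpace ℝ)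
  | Sum.inr (Sum.inr (Sum.inr _)) => inferInstanceAs (MeasurableSpace ℝ)

/-- All random elements of the model, bundled as a single family. -/
def modelRV {d : ℕ} {Ω : Type} (X : ℕ → Ω → (Fin d → ℝ)) (Y : ℕ → ℕ → Ω → (Fin d → ℝ))
    (M : ℕ → Ω → ℕ) (Del : ℕ → ℕ → Ω → ℝ) (θ : ℕ → Ω → ℝ) :
    ∀ i : ModelIdx, Ω → ModelCod d i
  | Sum.inl (Sum.inl n) => X n
  | Sum.inl (Sum.inr p) => Y p.1 p.2
  | Sum.inr (Sum.inl n) => M n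
  | Sum.inr (Sum.inr (Sum.inl p)) => Del p.1 p.2
  | Sum.inr (Sum.inr (Sum.inr n)) => θ n

/-- Arrival time `τ_i = θ_1 + ⋯ + θ_i` (here `θ k` stands for `θ_{k+1}`). -/
def arrival {Ω : Type} (θ : ℕ → Ω → ℝ) (i : ℕ) (ω : Ω) : ℝ :=
  ∑ k ∈ Finset.range i, θ k ω

/-- The renewal counting process `N(t) = sup {n : τ_n ≤ t}`. -/
def Ncount {Ω : Type} (θ : ℕ → Ω → ℝ) (t : ℝ) (ω : Ω) : ℕ :=
  sSup {n : ℕ | arrival θ n ω ≤ t}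

/-- The renewal function `λ(t) = E[N(t)] = ∑_{i≥1} P(τ_i ≤ t)`. -/
def renewalFn {Ω : Type} [MeasurableSpace Ω] (P : Measure Ω) (θ : ℕ → Ω → ℝ) (t : ℝ) : ℝ :=
  ∑' i : ℕ, (P {ω | arrival θ (i + 1) ω ≤ t}).toReal

/-- The multidimensional delayed renewal risk model: i.i.d. main claim vectors `X ∼ F`,
i.i.d. delayed claim vectors `Y ∼ G`, i.i.d. numbers of delayed claims `M`, i.i.d.
nonnegative delays `Del`, i.i.d. positive inter-arrival times `θ`, all five sequences
mutually independent, with a finite renewal function. -/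
structure DelayedRenewalModel (d : ℕ) (Ω : Type) [MeasurableSpace Ω]
    (P : Measure Ω) (F G : Measure (Fin d → ℝ)) where
  X : ℕ → Ω → (Fin d → ℝ)
  Y : ℕ → ℕ → Ω → (Fin d → ℝ)
  M : ℕ → Ω → ℕ
  Del : ℕ → ℕ → Ω → ℝ
  θ : ℕ → Ω → ℝ
  measX : ∀ i, Measurable (X i)
  measY : ∀ i j, Measurable (Y i j)
  measM : ∀ i, Measurable (M i)
  measDel : ∀ i j, Measurable (Del i j)
  measθ : ∀ i, Measurable (θ i)
  nonnegX : ∀ i ω, 0 ≤ X i ω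
  nonnegY : ∀ i j ω, 0 ≤ Y i j ω
  nonnegDel : ∀ i j ω, 0 ≤ Del i j ω
  posθ : ∀ i ω, 0 < θ i ω
  distX : ∀ i, P.map (X i) = F
  distY : ∀ i j, P.map (Y i j) = G
  distM : ∀ i, P.map (M i) = P.map (M 0)
  distDel : ∀ i j, P.map (Del i j) = P.map (Del 0 0)
  distθ : ∀ i, P.map (θ i) = P.map (θ 0)
  indep : iIndepFun (modelRV X Y M Del θ) P
  renewalFin : ∀ t : ℝ, (∑' i : ℕ, P {ω | arrival θ (i + 1) ω ≤ t}) ≠ ⊤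

/-- The discounted aggregate claims `D_r(t)`. -/
def discAgg {d : ℕ} {Ω : Type} (X : ℕ → Ω → (Fin d → ℝ)) (Y : ℕ → ℕ → Ω → (Fin d → ℝ))
    (M : ℕ → Ω → ℕ) (Del : ℕ → ℕ → Ω → ℝ) (θ : ℕ → Ω → ℝ) (r t : ℝ) (ω : Ω) :
    Fin d → ℝ :=
  (∑ i ∈ Finset.range (Ncount θ t ω), Real.exp (-(r * arrival θ (i + 1) ω)) • X i ω) +
    ∑ i ∈ Finset.range (Ncount θ t ω), ∑ j ∈ Finset.range (M i ω),
      if arrival θ (i + 1) ω + Del i j ω ≤ t then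
        Real.exp (-(r * (arrival θ (i + 1) ω + Del i j ω))) • Y i j ω
      else 0

/-- `∫_0^t P(X ∈ x e^{rs} A) λ(ds) = ∑_{i≥1} E[P(X ∈ x e^{rτ_i} A) 1_{τ_i ≤ t}]`. -/
def term1 {d : ℕ} {Ω : Type} [MeasurableSpace Ω] (P : Measure Ω)
    (F : Measure (Fin d → ℝ)) (A : Set (Fin d → ℝ)) (θ : ℕ → Ω → ℝ) (r x t : ℝ) : ℝ :=
  ∑' i : ℕ, ∫ ω, Set.indicator {ω' | arrival θ (i + 1) ω' ≤ t}
      (fun ω' => (F ((x * Real.exp (r * arrival θ (i + 1) ω')) • A)).toReal) ω ∂P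

/-- `∫_0^t ∫_0^{t-s} P(Y ∈ x e^{r(s+y)} A) H(dy) λ(ds)`, unfolded with a generic delay
`D = Del 0 0` independent of the arrival times. -/
def term2 {d : ℕ} {Ω : Type} [MeasurableSpace Ω] (P : Measure Ω)
    (G : Measure (Fin d → ℝ)) (A : Set (Fin d → ℝ)) (θ : ℕ → Ω → ℝ)
    (Del : ℕ → ℕ → Ω → ℝ) (r x t : ℝ) : ℝ :=
  ∑' i : ℕ, ∫ ω, Set.indicator {ω' | arrival θ (i + 1) ω' + Del 0 0 ω' ≤ t}
      (fun ω' => (G ((x * Real.exp (r * (arrival θ (i + 1) ω' + Del 0 0 ω'))) • A)).toReal)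
      ω ∂P

/-- `E[M]`. -/
def meanM {Ω : Type} [MeasurableSpace Ω] (P : Measure Ω) (M : ℕ → Ω → ℕ) : ℝ :=
  ∫ ω, (M 0 ω : ℝ) ∂P

/-- Codomains of the random elements of the renewal model with claims `Z` and
inter-arrival times `θ`. -/
def Cod16 (d : ℕ) : ℕ ⊕ ℕ → Type
  | Sum.inl _ => Fin d → ℝ
  | Sum.inr _ => ℝ

instance cod16MS (d : ℕ) : ∀ i : ℕ ⊕ ℕ, MeasurableSpace (Cod16 d i)
  | Sum.inl _ => inferInstanceAs (MeasurableSpace (Fin d → ℝ))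
  | Sum.inr _ => inferInstanceAs (MeasurableSpace ℝ)

/-- The claim vectors and the inter-arrival times bundled as a single family. -/
def rv16 {d : ℕ} {Ω : Type} (Z : ℕ → Ω → (Fin d → ℝ)) (θ : ℕ → Ω → ℝ) :
    ∀ i : ℕ ⊕ ℕ, Ω → Cod16 d i
  | Sum.inl k => Z k
  | Sum.inr k => θ k

section AuxLemmas

open MeasureTheory ProbabilityTheory Filter Set
open scoped Topology ENNReal Pointwise

lemma rare_smul_subset_s16 {d : ℕ} {A : Set (Fin d → ℝ)} (hA : IsRareSet d A)
    {u v : ℝ} (hv : 0 < v) (huv : v ≤ u) : u • A ⊆ v • A := by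
  have hu : 0 < u := lt_of_lt_of_le hv huv
  rintro z ⟨a, ha, rfl⟩
  refine ⟨(v⁻¹ * u) • a, ?_, ?_⟩
  · by_contra hmem
    have h0c : (0 : Fin d → ℝ) ∈ Aᶜ := fun h => hA.2.2.2.2 (subset_closure h)
    have hs1 : (0:ℝ) ≤ u⁻¹ * v := by positivity
    have hs2 : u⁻¹ * v ≤ 1 := by
      rw [← inv_mul_cancel₀ hu.ne']
      exact mul_le_mul_of_nonneg_left huv (inv_nonneg.2 hu.le)
    have hcomb := hA.2.2.2.1 (hmem : (v⁻¹ * u) • a ∈ Aᶜ) h0c hs1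
      (by linarith : (0:ℝ) ≤ 1 - u⁻¹ * v) (by ring)
    apply hcomb
    have : (u⁻¹ * v) • (v⁻¹ * u) • a + (1 - u⁻¹ * v) • (0 : Fin d → ℝ) = a := by
      rw [smul_zero, add_zero, smul_smul]
      have hh : u⁻¹ * v * (v⁻¹ * u) = 1 := by field_simp
      rw [hh, one_smul]
    rw [this]
    exact ha
  · show v • ((v⁻¹ * u) • a) = u • a
    rw [smul_smul]
    congr 1
    field_simp

lemma rare_scale_mono {d : ℕ} {A : Set (Fin d → ℝ)} (hA : IsRareSet d A)
    {x r : ℝ} (hx : 0 ≤ x) (hr : 0 ≤ r) {s s' : ℝ} (hss : s ≤ s') :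
    (x * Real.exp (r * s')) • A ⊆ (x * Real.exp (r * s)) • A := by
  rcases eq_or_lt_of_le hx with h0 | hxpos
  · rw [← h0, zero_mul, zero_mul]
  · exact rare_smul_subset_s16 hA (by positivity)
      (mul_le_mul_of_nonneg_left (Real.exp_le_exp.2 (mul_le_mul_of_nonneg_left hss hr)) hxpos.le)

lemma measD {d : ℕ} {A : Set (Fin d → ℝ)} (hA : IsRareSet d A) {x r : ℝ} (hx : 0 ≤ x) :
    MeasurableSet {q : ℝ × (Fin d → ℝ) | q.2 ∈ (x * Real.exp (r * q.1)) • A} := by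
  rcases eq_or_lt_of_le hx with h0 | hxpos
  · rcases Set.eq_empty_or_nonempty A with hAe | hAne
    · have : {q : ℝ × (Fin d → ℝ) | q.2 ∈ (x * Real.exp (r * q.1)) • A} = ∅ := by
        ext q; simp [hAe]
      rw [this]; exact MeasurableSet.empty
    · have : {q : ℝ × (Fin d → ℝ) | q.2 ∈ (x * Real.exp (r * q.1)) • A}
          = Prod.snd ⁻¹' ({0} : Set (Fin d → ℝ)) := by
        ext q
        simp [← h0, zero_smul_set hAne]
      rw [this]
      exact measurable_snd (MeasurableSet.singleton 0)
  · have hne : ∀ s : ℝ, x * Real.exp (r * s) ≠ 0 := fun s => by positivity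
    have : {q : ℝ × (Fin d → ℝ) | q.2 ∈ (x * Real.exp (r * q.1)) • A}
        = (fun q : ℝ × (Fin d → ℝ) => (x * Real.exp (r * q.1))⁻¹ • q.2) ⁻¹' A := by
      ext q
      exact mem_smul_set_iff_inv_smul_mem₀ (hne q.1) A q.2
    rw [this]
    have hc : Continuous fun q : ℝ × (Fin d → ℝ) => (x * Real.exp (r * q.1))⁻¹ :=
      (continuous_const.mul (Real.continuous_exp.comp (continuous_const.mul continuous_fst))).inv₀
        (fun q => hne q.1)
    exact (hc.smul continuous_snd).measurable hA.2.1.measurableSet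

lemma arrival_mono' {Ω : Type} {θ : ℕ → Ω → ℝ} (hpos : ∀ i ω, 0 < θ i ω) (ω : Ω)
    {a b : ℕ} (hab : a ≤ b) : arrival θ a ω ≤ arrival θ b ω :=
  Finset.sum_le_sum_of_subset_of_nonneg (Finset.range_subset_range.2 hab) fun i _ _ => (hpos i ω).le

lemma ncount_arrival_le {Ω : Type} {θ : ℕ → Ω → ℝ} {t : ℝ} {ω : Ω} {n : ℕ}
    (hn : Ncount θ t ω = n) (h0 : n ≠ 0) : arrival θ n ω ≤ t := by
  classical
  by_cases hbdd : BddAbove {m : ℕ | arrival θ m ω ≤ t}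
  · have hne : {m : ℕ | arrival θ m ω ≤ t}.Nonempty := by
      by_contra h
      rw [Set.not_nonempty_iff_eq_empty] at h
      apply h0
      rw [← hn]
      show sSup {m : ℕ | arrival θ m ω ≤ t} = 0
      rw [h, csSup_empty]
      rfl
    have hmem := Nat.sSup_mem hne hbdd
    have hsup : sSup {m : ℕ | arrival θ m ω ≤ t} = n := hn
    rw [hsup] at hmem
    exact hmem
  · exfalso
    apply h0
    rw [← hn]
    show sSup {m : ℕ | arrival θ m ω ≤ t} = 0
    rw [csSup_of_not_bddAbove hbdd, csSup_empty]
    rfl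

lemma measurableSet_ncount_eq {Ω : Type} [MeasurableSpace Ω] {θ : ℕ → Ω → ℝ}
    (hθ : ∀ i, Measurable (θ i)) (hpos : ∀ i ω, 0 < θ i ω) (t : ℝ) {n : ℕ} (h0 : n ≠ 0) :
    MeasurableSet {ω | Ncount θ t ω = n} := by
  have harr : ∀ m : ℕ, Measurable (arrival θ m) := fun m =>
    Finset.measurable_sum _ fun i _ => hθ i
  have hch : {ω | Ncount θ t ω = n}
      = {ω | arrival θ n ω ≤ t} ∩ {ω | ¬ arrival θ (n+1) ω ≤ t} := by
    ext ω
    simp only [Set.mem_inter_iff, Set.mem_setOf_eq]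
    constructor
    · intro h
      refine ⟨ncount_arrival_le h h0, fun hc => ?_⟩
      have hbdd : BddAbove {m : ℕ | arrival θ m ω ≤ t} := by
        by_contra hb
        apply h0
        rw [← h]
        show sSup {m : ℕ | arrival θ m ω ≤ t} = 0
        rw [csSup_of_not_bddAbove hb, csSup_empty]
        rfl
      have hle := le_csSup hbdd (show n+1 ∈ {m : ℕ | arrival θ m ω ≤ t} from hc)
      have h' : sSup {m : ℕ | arrival θ m ω ≤ t} = n := h
      omega
    · rintro ⟨h1, h2⟩
      have hub : ∀ m ∈ {m : ℕ | arrival θ m ω ≤ t}, m ≤ n := by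
        intro m hm
        by_contra hc
        exact h2 (le_trans (arrival_mono' hpos ω (by omega : n+1 ≤ m)) hm)
      exact le_antisymm (csSup_le ⟨n, h1⟩ hub) (le_csSup ⟨n, hub⟩ h1)
  rw [hch]
  exact (harr n measurableSet_Iic).inter ((harr (n+1) measurableSet_Iic).compl)

lemma indepFun_finsetSum_finsetSum {Ω : Type} [MeasurableSpace Ω] {P : Measure Ω}
    {θ : ℕ → Ω → ℝ} (hθ : ∀ i, Measurable (θ i))
    (hind : iIndepFun θ P) {S T : Finset ℕ} (hST : Disjoint S T) :
    IndepFun (fun ω => ∑ k ∈ S, θ k ω) (fun ω => ∑ k ∈ T, θ k ω) P := by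
  have h := hind.indepFun_finset S T hST hθ
  have hs : Measurable fun v : S → ℝ => ∑ i, v i :=
    Finset.measurable_sum _ fun i _ => measurable_pi_apply i
  have ht : Measurable fun v : T → ℝ => ∑ i, v i :=
    Finset.measurable_sum _ fun i _ => measurable_pi_apply i
  have h2 := h.comp hs ht
  have e1 : ((fun v : S → ℝ => ∑ i, v i) ∘ fun a (i : S) => θ i a)
      = fun ω => ∑ k ∈ S, θ k ω := by
    funext ω
    exact Finset.sum_coe_sort S fun k => θ k ω
  have e2 : ((fun v : T → ℝ => ∑ i, v i) ∘ fun a (i : T) => θ i a)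
      = fun ω => ∑ k ∈ T, θ k ω := by
    funext ω
    exact Finset.sum_coe_sort T fun k => θ k ω
  rw [e1, e2] at h2
  exact h2

def toR16 {d : ℕ} : ∀ j : ℕ ⊕ ℕ, Cod16 d j → ℝ
  | Sum.inl _ => fun _ => 0
  | Sum.inr _ => id

lemma measurable_toR16 {d : ℕ} : ∀ j, Measurable (toR16 (d := d) j)
  | Sum.inl _ => measurable_const
  | Sum.inr _ => measurable_id

lemma indepFun_pairSum_Z {d : ℕ} {Ω : Type} [MeasurableSpace Ω] {P : Measure Ω}
    {Z : ℕ → Ω → Fin d → ℝ} {θ : ℕ → Ω → ℝ}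
    (measZ : ∀ i, Measurable (Z i)) (measθ : ∀ i, Measurable (θ i))
    (indep : iIndepFun (rv16 Z θ) P)
    (S₁ S₂ : Finset ℕ) (i : ℕ) :
    IndepFun (fun ω => (∑ k ∈ S₁, θ k ω, ∑ k ∈ S₂, θ k ω)) (Z i) P := by
  classical
  set S : Finset (ℕ ⊕ ℕ) := S₁.image Sum.inr ∪ S₂.image Sum.inr with hSdef
  set T : Finset (ℕ ⊕ ℕ) := {Sum.inl i} with hTdef
  have hST : Disjoint S T := by
    rw [Finset.disjoint_right]
    intro a haT haS
    rw [hTdef, Finset.mem_singleton] at haT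
    subst haT
    simp [hSdef] at haS
  have hmeas : ∀ j, Measurable (rv16 Z θ j) := by
    rintro (k | k)
    · exact measZ k
    · exact measθ k
  have h := indep.indepFun_finset S T hST hmeas
  set φ : ((j : S) → Cod16 d j.1) → ℝ × ℝ := fun v =>
    (∑ j ∈ S.attach, (if j.1 ∈ S₁.image Sum.inr then toR16 j.1 (v j) else 0),
     ∑ j ∈ S.attach, (if j.1 ∈ S₂.image Sum.inr then toR16 j.1 (v j) else 0)) with hφdef
  have hφ : Measurable φ := by
    apply Measurable.prodMk
    · apply Finset.measurable_sum
      intro j _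
      by_cases hj : j.1 ∈ S₁.image Sum.inr
      · simp only [hj, if_true]
        exact (measurable_toR16 j.1).comp (measurable_pi_apply j)
      · simp only [hj, if_false]
        exact measurable_const
    · apply Finset.measurable_sum
      intro j _
      by_cases hj : j.1 ∈ S₂.image Sum.inr
      · simp only [hj, if_true]
        exact (measurable_toR16 j.1).comp (measurable_pi_apply j)
      · simp only [hj, if_false]
        exact measurable_const
  set ψ : ((j : T) → Cod16 d j.1) → (Fin d → ℝ) :=
    fun v => v ⟨Sum.inl i, Finset.mem_singleton_self _⟩ with hψdef
  have hψ : Measurable ψ := measurable_pi_apply _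
  have h2 := h.comp hφ hψ
  have hsum : ∀ (S' : Finset ℕ) (ω : Ω), S'.image Sum.inr ⊆ S →
      (∑ j ∈ S.attach, (if j.1 ∈ S'.image Sum.inr then
          toR16 j.1 (rv16 Z θ j.1 ω) else 0)) = ∑ k ∈ S', θ k ω := by
    intro S' ω hsub
    rw [Finset.sum_attach S (fun j => if j ∈ S'.image Sum.inr then toR16 j (rv16 Z θ j ω) else 0)]
    rw [Finset.sum_ite_mem]
    rw [Finset.inter_eq_right.2 hsub]
    rw [Finset.sum_image (fun a _ b _ h => Sum.inr_injective h)]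
    rfl
  have e1 : (φ ∘ fun a (j : S) => rv16 Z θ j a)
      = fun ω => (∑ k ∈ S₁, θ k ω, ∑ k ∈ S₂, θ k ω) := by
    funext ω
    simp only [Function.comp_apply, hφdef]
    exact Prod.ext (hsum S₁ ω Finset.subset_union_left) (hsum S₂ ω Finset.subset_union_right)
  have e2 : (ψ ∘ fun a (j : T) => rv16 Z θ j a) = Z i := rfl
  rw [e1, e2] at h2
  exact h2

lemma prob_pair_eq_lintegral {Ω α β : Type} [MeasurableSpace Ω] [MeasurableSpace α]
    [MeasurableSpace β] {P : Measure Ω} [IsProbabilityMeasure P] {W : Ω → β} {Z : Ω → α}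
    (hW : Measurable W) (hZ : Measurable Z) (h : IndepFun W Z P)
    {C : Set (β × α)} (hC : MeasurableSet C) :
    P {ω | (W ω, Z ω) ∈ C} = ∫⁻ ω, (P.map Z) (Prod.mk (W ω) ⁻¹' C) ∂P := by
  haveI hZP : IsProbabilityMeasure (P.map Z) := Measure.isProbabilityMeasure_map hZ.aemeasurable
  have hmap : P.map (fun ω => (W ω, Z ω)) = (P.map W).prod (P.map Z) :=
    (indepFun_iff_map_prod_eq_prod_map_map hW.aemeasurable hZ.aemeasurable).1 h
  calc P {ω | (W ω, Z ω) ∈ C} = P.map (fun ω => (W ω, Z ω)) C := by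
        rw [Measure.map_apply (hW.prodMk hZ) hC]
        rfl
    _ = ((P.map W).prod (P.map Z)) C := by rw [hmap]
    _ = ∫⁻ b, (P.map Z) (Prod.mk b ⁻¹' C) ∂(P.map W) := Measure.prod_apply hC
    _ = ∫⁻ ω, (P.map Z) (Prod.mk (W ω) ⁻¹' C) ∂P :=
        lintegral_map (measurable_measure_prodMk_left hC) hW

lemma map_add_of_indep {Ω : Type} [MeasurableSpace Ω] {P : Measure Ω} [IsProbabilityMeasure P]
    {X Y : Ω → ℝ} (hX : Measurable X) (hY : Measurable Y) (h : IndepFun X Y P) :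
    P.map (fun ω => X ω + Y ω) = ((P.map X).prod (P.map Y)).map (fun p : ℝ × ℝ => p.1 + p.2) := by
  rw [← (indepFun_iff_map_prod_eq_prod_map_map hX.aemeasurable hY.aemeasurable).1 h,
    Measure.map_map (g := fun p : ℝ × ℝ => p.1 + p.2) (measurable_fst.add measurable_snd) (hX.prodMk hY)]
  rfl

lemma map_block_sum {Ω : Type} [MeasurableSpace Ω] {P : Measure Ω} [IsProbabilityMeasure P]
    {θ : ℕ → Ω → ℝ} (measθ : ∀ i, Measurable (θ i))
    (iidθ : iIndepFun θ P)
    (distθ : ∀ i, P.map (θ i) = P.map (θ 0)) :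
    ∀ (n a : ℕ), P.map (fun ω => ∑ k ∈ Finset.Ico a (a + n), θ k ω) = P.map (arrival θ n) := by
  intro n
  induction n with
  | zero =>
    intro a
    have h1 : (fun ω => ∑ k ∈ Finset.Ico a (a+0), θ k ω) = fun _ => (0:ℝ) := by
      funext ω; simp
    have h2 : arrival θ 0 = fun _ => (0:ℝ) := by
      funext ω; simp [arrival]
    rw [h1, h2]
  | succ n ih =>
    intro a
    have hmb : Measurable fun ω => ∑ k ∈ Finset.Ico a (a+n), θ k ω :=
      Finset.measurable_sum _ fun k _ => measθ k
    have hma : Measurable (arrival θ n) := Finset.measurable_sum _ fun k _ => measθ k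
    have h1 : (fun ω => ∑ k ∈ Finset.Ico a (a+(n+1)), θ k ω)
        = fun ω => (∑ k ∈ Finset.Ico a (a+n), θ k ω) + θ (a+n) ω := by
      funext ω
      rw [show a + (n+1) = (a+n)+1 from rfl, Finset.sum_Ico_succ_top (Nat.le_add_right a n)]
    have h2 : arrival θ (n+1) = fun ω => arrival θ n ω + θ n ω := by
      funext ω
      exact Finset.sum_range_succ _ _
    have hi1 : IndepFun (fun ω => ∑ k ∈ Finset.Ico a (a+n), θ k ω) (θ (a+n)) P := by
      have hd : Disjoint (Finset.Ico a (a+n)) ({a+n} : Finset ℕ) := by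
        simp [Finset.disjoint_singleton_right]
      have := indepFun_finsetSum_finsetSum measθ iidθ hd
      simpa [Finset.sum_singleton] using this
    have hi2 : IndepFun (arrival θ n) (θ n) P := by
      have hd : Disjoint (Finset.range n) ({n} : Finset ℕ) := by
        simp [Finset.disjoint_singleton_right]
      have := indepFun_finsetSum_finsetSum measθ iidθ hd
      simp only [Finset.sum_singleton] at this
      exact this
    rw [h1, h2, map_add_of_indep hmb (measθ (a+n)) hi1, map_add_of_indep hma (measθ n) hi2,
      ih a, distθ (a+n), distθ n]

lemma tsum_ite_tail (c : ℕ → ℝ≥0∞) (M : ℕ) :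
    (∑' i, if M < i then c i else 0) = ∑' j, c (j + (M+1)) := by
  refine tsum_eq_tsum_of_ne_zero_bij (fun x => x.1 + (M+1)) ?_ ?_ ?_
  · intro a b hab
    have := hab
    simp only at this
    exact Subtype.ext (by omega)
  · intro a ha
    simp only [Function.mem_support, ne_eq, ite_eq_right_iff, not_forall] at ha
    obtain ⟨hMa, hca⟩ := ha
    refine ⟨⟨a - (M+1), ?_⟩, ?_⟩
    · simp only [Function.mem_support, ne_eq]
      rw [show a - (M+1) + (M+1) = a by omega]
      exact hca
    · simp only
      omega
  · intro x
    rw [if_pos (by omega : M < x.1 + (M+1))]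

end AuxLemmas

/-- Lemma 3.3: uniform negligibility (in `t ∈ Λ_T` and `x ≥ 0`) of the contribution of
the claims arriving after the `N`-th one. -/
theorem statement16 {d : ℕ} {Ω : Type} [MeasurableSpace Ω] {P : Measure Ω}
    [IsProbabilityMeasure P] {A : Set (Fin d → ℝ)} (hA : IsRareSet d A)
    (Z : ℕ → Ω → (Fin d → ℝ)) (V : Measure (Fin d → ℝ)) (θ : ℕ → Ω → ℝ)
    (measZ : ∀ i, Measurable (Z i)) (measθ : ∀ i, Measurable (θ i))
    (nonnegZ : ∀ i ω, 0 ≤ Z i ω) (posθ : ∀ i ω, 0 < θ i ω)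
    (distZ : ∀ i, P.map (Z i) = V) (distθ : ∀ i, P.map (θ i) = P.map (θ 0))
    (iidZ : iIndepFun Z P)
    (iidθ : iIndepFun θ P)
    (indep : iIndepFun (rv16 Z θ) P)
    (renewalFin : ∀ t : ℝ, (∑' i : ℕ, P {ω | arrival θ (i + 1) ω ≤ t}) ≠ ⊤)
    (hV : SubexpA V A) {r : ℝ} (hr : 0 ≤ r) {T : ℝ} (hT : 0 < renewalFn P θ T) :
    Tendsto (fun N : ℕ =>
        ⨆ t : {t : ℝ // t ∈ Set.Icc 0 T ∧ 0 < renewalFn P θ t},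
          ⨆ x : {x : ℝ // 0 ≤ x},
            (∑' k : ℕ, ∑ i ∈ Finset.range (N + 1 + k),
                (P {ω | Real.exp (-(r * arrival θ (i + 1) ω)) • Z i ω ∈ x.1 • A ∧
                    Ncount θ t.1 ω = N + 1 + k}).toReal) /
              term1 P V A θ r x.1 t.1)
      atTop (𝓝 0) := by
  classical
  have harr : ∀ n : ℕ, Measurable (arrival θ n) := fun n =>
    Finset.measurable_sum _ fun k _ => measθ k
  have harr_nonneg : ∀ (n : ℕ) (ω : Ω), 0 ≤ arrival θ n ω := fun n ω =>
    Finset.sum_nonneg fun i _ => (posθ i ω).le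
  haveI hVP : IsProbabilityMeasure V := by
    rw [← distZ 0]
    exact Measure.isProbabilityMeasure_map (measZ 0).aemeasurable
  have hT0 : 0 < T := by
    by_contra hcon
    push_neg at hcon
    have hz : ∀ i : ℕ, P {ω | arrival θ (i+1) ω ≤ T} = 0 := by
      intro i
      have he : {ω | arrival θ (i+1) ω ≤ T} = ∅ := by
        ext ω
        simp only [Set.mem_setOf_eq, Set.mem_empty_iff_false, iff_false, not_le]
        have h3 : arrival θ 1 ω = θ 0 ω := by simp [arrival]
        have h2 := arrival_mono' posθ ω (show 1 ≤ i+1 by omega)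
        have := posθ 0 ω
        linarith
      rw [he, measure_empty]
    rw [renewalFn] at hT
    simp only [hz, ENNReal.toReal_zero, tsum_zero] at hT
    exact lt_irrefl 0 hT
  -- the tail probabilities of the arrival times
  set c : ℕ → ℝ≥0∞ := fun j => P {ω | arrival θ j ω ≤ T} with hc_def
  have hc1 : ∀ j, c j ≤ 1 := fun j => prob_le_one
  have hc_ne : ∀ j, c j ≠ ⊤ := fun j => ((hc1 j).trans_lt ENNReal.one_lt_top).ne
  have hc_anti : ∀ {a b : ℕ}, a ≤ b → c b ≤ c a := by
    intro a b hab
    exact measure_mono fun ω h => le_trans (arrival_mono' posθ ω hab) h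
  have hc_sum : (∑' j, c j) ≠ ⊤ := by
    have hb : ∀ n : ℕ, (∑ j ∈ Finset.range n, c j)
        ≤ 1 + ∑' i : ℕ, P {ω | arrival θ (i+1) ω ≤ T} := by
      intro n
      cases n with
      | zero => simp
      | succ n =>
        rw [Finset.sum_range_succ']
        calc (∑ i ∈ Finset.range n, c (i+1)) + c 0
            ≤ (∑' i, c (i+1)) + 1 := add_le_add (ENNReal.sum_le_tsum _) (hc1 0)
          _ = 1 + ∑' i, c (i+1) := add_comm _ _
          _ = 1 + ∑' i : ℕ, P {ω | arrival θ (i+1) ω ≤ T} := rfl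
    have hle := ENNReal.tsum_le_of_sum_range_le hb
    exact (lt_of_le_of_lt hle (ENNReal.add_lt_top.2
      ⟨ENNReal.one_lt_top, lt_top_iff_ne_top.2 (renewalFin T)⟩)).ne
  set εE : ℕ → ℝ≥0∞ := fun M => ∑' j, c (j + M) with hεE_def
  have hεE_le : ∀ M, εE M ≤ ∑' j, c j := fun M =>
    ENNReal.tsum_comp_le_tsum_of_injective (fun a b hab => by omega) c
  have hεE_ne : ∀ M, εE M ≠ ⊤ := fun M =>
    ((hεE_le M).trans_lt (lt_top_iff_ne_top.2 hc_sum)).ne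
  have hc_le_εE : ∀ M, c M ≤ εE M := by
    intro M
    have h := ENNReal.le_tsum (f := fun j => c (j + M)) 0
    simpa using h
  have hεE_to : Tendsto (fun M => (εE M).toReal) atTop (𝓝 0) := by
    have h1 := ENNReal.tendsto_sum_nat_add c hc_sum
    have h2 := (ENNReal.tendsto_toReal (a := 0) (by simp)).comp h1
    have h3 : (ENNReal.toReal ∘ fun i => ∑' k, c (k + i)) = fun M => (εE M).toReal := rfl
    rw [h3] at h2
    simpa using h2
  -- the key uniform bound
  have key : ∀ m N : ℕ, m ≤ N → ∀ t : ℝ, t ∈ Set.Icc 0 T → ∀ x : ℝ, 0 ≤ x →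
      (∑' k : ℕ, ∑ i ∈ Finset.range (N + 1 + k),
          (P {ω | Real.exp (-(r * arrival θ (i + 1) ω)) • Z i ω ∈ x • A ∧
              Ncount θ t ω = N + 1 + k}).toReal) / term1 P V A θ r x t
        ≤ (c m).toReal + (εE (N - m)).toReal := by
    intro m N hmN t ht x hx
    obtain ⟨ht0, htT⟩ := ht
    -- the scaled tail function and its truncations
    have hD : MeasurableSet {q : ℝ × (Fin d → ℝ) | q.2 ∈ (x * Real.exp (r * q.1)) • A} :=
      measD hA hx
    set g : ℝ → ℝ≥0∞ := fun s => V ((x * Real.exp (r * s)) • A) with hg_def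
    have hg_meas : Measurable g := measurable_measure_prodMk_left (ν := V) hD
    have hg_anti : ∀ {s s' : ℝ}, s ≤ s' → g s' ≤ g s := fun {s s'} h =>
      measure_mono (rare_scale_mono hA hx hr h)
    have hg1 : ∀ s, g s ≤ 1 := fun s => prob_le_one
    set G : ℝ → ℝ≥0∞ := fun s => Set.indicator (Set.Iic t) g s with hG_def
    have hG_meas : Measurable G := hg_meas.indicator measurableSet_Iic
    have hG1 : ∀ s, G s ≤ 1 := by
      intro s
      by_cases hs : s ∈ Set.Iic t
      · rw [hG_def]
        simp only [Set.indicator_of_mem hs]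
        exact hg1 s
      · rw [hG_def]
        simp only [Set.indicator_of_notMem hs]
        exact zero_le
    set H : ℝ → ℝ≥0∞ := fun s => Set.indicator (Set.Iic T) (fun _ => (1:ℝ≥0∞)) s with hH_def
    have hH_meas : Measurable H := measurable_const.indicator measurableSet_Iic
    -- the denominator pieces
    set DEN : ℕ → ℝ≥0∞ := fun i => ∫⁻ ω, G (arrival θ (i+1) ω) ∂P with hDEN_def
    have hDEN_le : ∀ i, DEN i ≤ P {ω | arrival θ (i+1) ω ≤ t} := by
      intro i
      have hpt : ∀ ω, G (arrival θ (i+1) ω)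
          ≤ Set.indicator {ω' | arrival θ (i+1) ω' ≤ t} (fun _ => (1:ℝ≥0∞)) ω := by
        intro ω
        by_cases hω : arrival θ (i+1) ω ≤ t
        · rw [hG_def]
          simp only [Set.indicator_of_mem (Set.mem_Iic.2 hω),
            Set.indicator_of_mem (show ω ∈ {ω' | arrival θ (i+1) ω' ≤ t} from hω)]
          exact hg1 _
        · rw [hG_def]
          simp only [Set.indicator_of_notMem (fun hh => hω (Set.mem_Iic.1 hh))]
          exact zero_le
      calc DEN i ≤ ∫⁻ ω, Set.indicator {ω' | arrival θ (i+1) ω' ≤ t} (fun _ => (1:ℝ≥0∞)) ω ∂P :=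
            lintegral_mono hpt
        _ = P {ω' | arrival θ (i+1) ω' ≤ t} :=
            lintegral_indicator_one (harr (i+1) measurableSet_Iic)
    have hDEN_ne : ∀ i, DEN i ≠ ⊤ := fun i =>
      (((hDEN_le i).trans prob_le_one).trans_lt ENNReal.one_lt_top).ne
    set SDEN : ℝ≥0∞ := ∑' i, DEN i with hSDEN_def
    have hSDEN_ne : SDEN ≠ ⊤ := by
      have h1 : SDEN ≤ ∑' i : ℕ, P {ω | arrival θ (i+1) ω ≤ t} :=
        ENNReal.tsum_le_tsum hDEN_le
      exact (h1.trans_lt (lt_top_iff_ne_top.2 (renewalFin t))).ne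
    -- term1 equals SDEN.toReal
    have hterm1 : term1 P V A θ r x t = SDEN.toReal := by
      rw [term1]
      have hsummand : ∀ i : ℕ, (∫ ω, Set.indicator {ω' | arrival θ (i + 1) ω' ≤ t}
          (fun ω' => (V ((x * Real.exp (r * arrival θ (i + 1) ω')) • A)).toReal) ω ∂P)
          = (DEN i).toReal := by
        intro i
        have heq : ∀ ω, Set.indicator {ω' | arrival θ (i + 1) ω' ≤ t}
            (fun ω' => (V ((x * Real.exp (r * arrival θ (i + 1) ω')) • A)).toReal) ω
            = (G (arrival θ (i+1) ω)).toReal := by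
          intro ω
          by_cases hω : arrival θ (i+1) ω ≤ t
          · rw [Set.indicator_of_mem (show ω ∈ {ω' | arrival θ (i+1) ω' ≤ t} from hω), hG_def]
            simp only [Set.indicator_of_mem (Set.mem_Iic.2 hω)]
            rfl
          · rw [Set.indicator_of_notMem (show ω ∉ {ω' | arrival θ (i+1) ω' ≤ t} from hω), hG_def]
            simp only [Set.indicator_of_notMem (fun hh => hω (Set.mem_Iic.1 hh))]
            simp
        rw [integral_congr_ae (ae_of_all _ heq)]
        rw [integral_toReal (f := fun ω => G (arrival θ (i+1) ω))
          ((hG_meas.comp (harr (i+1))).aemeasurable)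
          (ae_of_all _ fun ω => lt_of_le_of_lt (hG1 _) ENNReal.one_lt_top)]
      rw [tsum_congr hsummand, hSDEN_def, ENNReal.tsum_toReal_eq hDEN_ne]
    -- events
    set E : ℕ → Set Ω := fun i =>
      {ω | Real.exp (-(r * arrival θ (i + 1) ω)) • Z i ω ∈ x • A} with hE_def
    set B : ℕ → Set Ω := fun k => {ω | Ncount θ t ω = N + 1 + k} with hB_def
    have hB_meas : ∀ k, MeasurableSet (B k) := fun k =>
      measurableSet_ncount_eq measθ posθ t (by omega)
    have hmem_iff : ∀ (s : ℝ) (z : Fin d → ℝ),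
        Real.exp (-(r * s)) • z ∈ x • A ↔ z ∈ (x * Real.exp (r * s)) • A := by
      intro s z
      have h2 : Real.exp (r * s) * Real.exp (-(r * s)) = 1 := by
        rw [← Real.exp_add]
        simp
      simp only [Set.mem_smul_set]
      constructor
      · rintro ⟨a, ha, hax⟩
        refine ⟨a, ha, ?_⟩
        calc (x * Real.exp (r*s)) • a = Real.exp (r*s) • (x • a) := by
              rw [smul_smul, mul_comm]
          _ = Real.exp (r*s) • (Real.exp (-(r*s)) • z) := by rw [hax]
          _ = z := by rw [smul_smul, h2, one_smul]
      · rintro ⟨a, ha, hax⟩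
        refine ⟨a, ha, ?_⟩
        calc x • a = (Real.exp (-(r*s)) * (x * Real.exp (r*s))) • a := by
              congr 1
              rw [show Real.exp (-(r*s)) * (x * Real.exp (r*s))
                  = x * (Real.exp (r*s) * Real.exp (-(r*s))) by ring, h2, mul_one]
          _ = Real.exp (-(r*s)) • ((x * Real.exp (r*s)) • a) := by rw [smul_smul]
          _ = Real.exp (-(r*s)) • z := by rw [hax]
    have hE_meas : ∀ i, MeasurableSet (E i) := by
      intro i
      have he : E i = (fun ω => (arrival θ (i+1) ω, Z i ω)) ⁻¹'
          {q : ℝ × (Fin d → ℝ) | q.2 ∈ (x * Real.exp (r * q.1)) • A} := by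
        ext ω
        rw [hE_def]
        simp only [Set.mem_setOf_eq, Set.mem_preimage]
        exact hmem_iff _ _
      rw [he]
      exact (harr (i+1)).prodMk (measZ i) hD
    -- the numerator
    set NUM0 : ℝ≥0∞ := ∑' k : ℕ, ∑ i ∈ Finset.range (N + 1 + k), P (E i ∩ B k) with hNUM0
    have hnum : (∑' k : ℕ, ∑ i ∈ Finset.range (N + 1 + k),
        (P {ω | Real.exp (-(r * arrival θ (i + 1) ω)) • Z i ω ∈ x • A ∧
            Ncount θ t ω = N + 1 + k}).toReal) = NUM0.toReal := by
      have h1 : ∀ k : ℕ, (∑ i ∈ Finset.range (N+1+k),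
          (P {ω | Real.exp (-(r * arrival θ (i + 1) ω)) • Z i ω ∈ x • A ∧
              Ncount θ t ω = N + 1 + k}).toReal)
          = (∑ i ∈ Finset.range (N+1+k), P (E i ∩ B k)).toReal :=
        fun k => (ENNReal.toReal_sum fun i _ => measure_ne_top P _).symm
      rw [tsum_congr h1, hNUM0, ENNReal.tsum_toReal_eq
        (fun k => (ENNReal.sum_lt_top.2 fun i _ => measure_lt_top P _).ne)]
    -- σN, C and Q
    set σN : ℕ → Ω → ℝ := fun i ω => ∑ k ∈ Finset.Ico (i+1) (N+1), θ k ω with hσN_def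
    have hσN_meas : ∀ i, Measurable (σN i) := fun i =>
      Finset.measurable_sum _ fun k _ => measθ k
    set C : Set ((ℝ × ℝ) × (Fin d → ℝ)) :=
      {p | p.2 ∈ (x * Real.exp (r * p.1.1)) • A ∧ p.1.1 ≤ t ∧ p.1.2 ≤ T} with hC_def
    have hC_meas : MeasurableSet C := by
      have h1 : C = ((fun p : (ℝ × ℝ) × (Fin d → ℝ) => (p.1.1, p.2)) ⁻¹'
            {q : ℝ × (Fin d → ℝ) | q.2 ∈ (x * Real.exp (r * q.1)) • A})
          ∩ ((fun p : (ℝ × ℝ) × (Fin d → ℝ) => p.1.1) ⁻¹' Set.Iic t)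
          ∩ ((fun p : (ℝ × ℝ) × (Fin d → ℝ) => p.1.2) ⁻¹' Set.Iic T) := by
        ext p
        rw [hC_def]
        simp only [Set.mem_setOf_eq, Set.mem_inter_iff, Set.mem_preimage, Set.mem_Iic]
        tauto
      rw [h1]
      exact ((((measurable_fst.fst.prodMk measurable_snd) hD).inter
        (measurable_fst.fst measurableSet_Iic)).inter (measurable_fst.snd measurableSet_Iic))
    set Q : ℕ → ℝ≥0∞ := fun i =>
      P {ω | ((arrival θ (i+1) ω, σN i ω), Z i ω) ∈ C} with hQ_def
    -- finite sums as tsums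
    have hfin : ∀ (n : ℕ) (f : ℕ → ℝ≥0∞),
        (∑ i ∈ Finset.range n, f i) = ∑' i, (if i < n then f i else 0) := by
      intro n f
      rw [tsum_eq_sum (s := Finset.range n)
        (f := fun i => if i < n then f i else 0)
        (fun b hb => if_neg (by simpa using hb))]
      exact Finset.sum_congr rfl fun i hi => by rw [if_pos (Finset.mem_range.1 hi)]
    have hswap : NUM0 = ∑' i, ∑' k, (if i < N+1+k then P (E i ∩ B k) else 0) := by
      rw [hNUM0]
      exact (tsum_congr fun k => hfin (N+1+k) (fun i => P (E i ∩ B k))).trans ENNReal.tsum_comm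
    -- per-claim bound: contribution through Q i
    have hQ_bound : ∀ i, (∑' k, (if i < N+1+k then P (E i ∩ B k) else 0)) ≤ Q i := by
      intro i
      have hDk : ∀ k : ℕ, (if i < N+1+k then P (E i ∩ B k) else 0)
          = P (if i < N+1+k then E i ∩ B k else ∅) := by
        intro k
        split
        · rfl
        · rw [measure_empty]
      rw [tsum_congr hDk]
      have hmeas' : ∀ k, MeasurableSet (if i < N+1+k then E i ∩ B k else ∅) := by
        intro k
        split
        · exact (hE_meas i).inter (hB_meas k)
        · exact MeasurableSet.empty
      have hdis : Pairwise (Function.onFun Disjoint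
          (fun k => if i < N+1+k then E i ∩ B k else ∅)) := by
        intro k k' hkk
        refine Set.disjoint_left.mpr fun ω h1 h2 => ?_
        have h1' : ω ∈ (if i < N+1+k then E i ∩ B k else ∅) := h1
        have h2' : ω ∈ (if i < N+1+k' then E i ∩ B k' else ∅) := h2
        by_cases hik : i < N+1+k
        · by_cases hik' : i < N+1+k'
          · rw [if_pos hik] at h1'
            rw [if_pos hik'] at h2'
            have e1 : Ncount θ t ω = N+1+k := h1'.2
            have e2 : Ncount θ t ω = N+1+k' := h2'.2
            exact hkk (by omega)
          · rw [if_neg hik'] at h2'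
            exact h2'
        · rw [if_neg hik] at h1'
          exact h1'
      rw [← measure_iUnion hdis hmeas']
      apply measure_mono
      rintro ω hω
      simp only [Set.mem_iUnion] at hω
      obtain ⟨k, hk⟩ := hω
      have hk' : ω ∈ (if i < N+1+k then E i ∩ B k else ∅) := hk
      by_cases hik : i < N+1+k
      · rw [if_pos hik] at hk'
        obtain ⟨hE1, hBk⟩ := hk'
        have hNc : arrival θ (N+1+k) ω ≤ t := ncount_arrival_le hBk (by omega)
        have hτ : arrival θ (i+1) ω ≤ t :=
          le_trans (arrival_mono' posθ ω (by omega)) hNc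
        have hσT : σN i ω ≤ T := by
          by_cases hiN : i ≤ N
          · have hsplit : arrival θ (i+1) ω + σN i ω = arrival θ (N+1) ω := by
              show (∑ k ∈ Finset.range (i+1), θ k ω) + (∑ k ∈ Finset.Ico (i+1) (N+1), θ k ω)
                = ∑ k ∈ Finset.range (N+1), θ k ω
              simp only [Finset.range_eq_Ico]
              exact Finset.sum_Ico_consecutive _ (by omega) (by omega)
            have hN1 : arrival θ (N+1) ω ≤ t :=
              le_trans (arrival_mono' posθ ω (by omega)) hNc
            have := harr_nonneg (i+1) ω
            linarith
          · have h0 : σN i ω = 0 := by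
              show (∑ k ∈ Finset.Ico (i+1) (N+1), θ k ω) = 0
              rw [Finset.Ico_eq_empty (by omega), Finset.sum_empty]
            rw [h0]
            linarith
        show ω ∈ {ω | ((arrival θ (i+1) ω, σN i ω), Z i ω) ∈ C}
        rw [Set.mem_setOf_eq, hC_def]
        refine ⟨(hmem_iff _ _).1 hE1, hτ, hσT⟩
      · rw [if_neg hik] at hk'
        exact absurd hk' (Set.notMem_empty ω)
    -- Q i in product form
    have hQ_eq : ∀ i, Q i = DEN i * c (N - i) := by
      intro i
      have hWmeas : Measurable fun ω => (arrival θ (i+1) ω, σN i ω) :=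
        (harr (i+1)).prodMk (hσN_meas i)
      have hindWZ : IndepFun (fun ω => (arrival θ (i+1) ω, σN i ω)) (Z i) P :=
        indepFun_pairSum_Z measZ measθ indep (Finset.range (i+1)) (Finset.Ico (i+1) (N+1)) i
      have hQ1 : Q i = ∫⁻ ω, V (Prod.mk (arrival θ (i+1) ω, σN i ω) ⁻¹' C) ∂P := by
        rw [hQ_def, ← distZ i]
        exact prob_pair_eq_lintegral hWmeas (measZ i) hindWZ hC_meas
      have hsec : ∀ w : ℝ × ℝ, V (Prod.mk w ⁻¹' C) = G w.1 * H w.2 := by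
        intro w
        by_cases h1 : w.1 ≤ t
        · by_cases h2 : w.2 ≤ T
          · have hpre : Prod.mk w ⁻¹' C = (x * Real.exp (r * w.1)) • A := by
              ext z
              rw [hC_def]
              simp only [Set.mem_preimage, Set.mem_setOf_eq, h1, h2, and_true]
            rw [hpre, hG_def, hH_def]
            simp only [Set.indicator_of_mem (Set.mem_Iic.2 h1),
              Set.indicator_of_mem (Set.mem_Iic.2 h2), mul_one]
            rfl
          · have hpre : Prod.mk w ⁻¹' C = ∅ := by
              ext z
              rw [hC_def]
              simp only [Set.mem_preimage, Set.mem_setOf_eq, Set.mem_empty_iff_false,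
                iff_false]
              tauto
            rw [hpre, measure_empty, hH_def]
            simp only [Set.indicator_of_notMem (fun hh => h2 (Set.mem_Iic.1 hh)), mul_zero]
        · have hpre : Prod.mk w ⁻¹' C = ∅ := by
            ext z
            rw [hC_def]
            simp only [Set.mem_preimage, Set.mem_setOf_eq, Set.mem_empty_iff_false,
              iff_false]
            tauto
          rw [hpre, measure_empty, hG_def]
          simp only [Set.indicator_of_notMem (fun hh => h1 (Set.mem_Iic.1 hh)), zero_mul]
      have hsec' : ∀ ω : Ω, V (Prod.mk (arrival θ (i+1) ω, σN i ω) ⁻¹' C)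
          = G (arrival θ (i+1) ω) * H (σN i ω) := fun ω => hsec _
      have hiτσ : IndepFun (arrival θ (i+1)) (σN i) P := by
        have hd : Disjoint (Finset.range (i+1)) (Finset.Ico (i+1) (N+1)) := by
          rw [Finset.disjoint_left]
          intro a ha hb
          simp only [Finset.mem_range] at ha
          simp only [Finset.mem_Ico] at hb
          omega
        exact indepFun_finsetSum_finsetSum measθ iidθ hd
      have hmul : (fun ω => G (arrival θ (i+1) ω) * H (σN i ω))
          = ((fun ω => G (arrival θ (i+1) ω)) * fun ω => H (σN i ω)) := rfl
      have hfact := lintegral_mul_eq_lintegral_mul_lintegral_of_indepFun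
        (hG_meas.comp (harr (i+1))) (hH_meas.comp (hσN_meas i))
        (hiτσ.comp hG_meas hH_meas)
      have hHσ : ∀ ω, H (σN i ω)
          = Set.indicator (σN i ⁻¹' Set.Iic T) (fun _ => (1:ℝ≥0∞)) ω := by
        intro ω
        by_cases hω : σN i ω ≤ T
        · rw [hH_def]
          simp only [Set.indicator_of_mem (Set.mem_Iic.2 hω),
            Set.indicator_of_mem (show ω ∈ σN i ⁻¹' Set.Iic T from Set.mem_Iic.2 hω)]
        · rw [hH_def]
          simp only [Set.indicator_of_notMem (fun hh => hω (Set.mem_Iic.1 hh)),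
            Set.indicator_of_notMem
              (show ω ∉ σN i ⁻¹' Set.Iic T from fun hh => hω (Set.mem_Iic.1 hh))]
      have hHint : (∫⁻ ω, H (σN i ω) ∂P) = c (N - i) := by
        have e1 : (∫⁻ ω, H (σN i ω) ∂P) = P (σN i ⁻¹' Set.Iic T) := by
          rw [lintegral_congr hHσ]
          exact lintegral_indicator_one (hσN_meas i measurableSet_Iic)
        rw [e1]
        have h1 : σN i = fun ω => ∑ k ∈ Finset.Ico (i+1) ((i+1) + (N-i)), θ k ω := by
          funext ω
          show (∑ k ∈ Finset.Ico (i+1) (N+1), θ k ω) = _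
          by_cases hiN : i ≤ N
          · rw [show (i+1) + (N-i) = N+1 by omega]
          · rw [Finset.Ico_eq_empty (by omega : ¬ i+1 < N+1),
              Finset.Ico_eq_empty (by omega : ¬ i+1 < (i+1) + (N-i))]
        have h2 : P (σN i ⁻¹' Set.Iic T) = (P.map (σN i)) (Set.Iic T) :=
          (Measure.map_apply (hσN_meas i) measurableSet_Iic).symm
        rw [h2, h1, map_block_sum measθ iidθ distθ (N-i) (i+1),
          Measure.map_apply (harr (N-i)) measurableSet_Iic]
        rfl
      calc Q i = ∫⁻ ω, V (Prod.mk (arrival θ (i+1) ω, σN i ω) ⁻¹' C) ∂P := hQ1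
        _ = ∫⁻ ω, G (arrival θ (i+1) ω) * H (σN i ω) ∂P := lintegral_congr hsec'
        _ = (∫⁻ ω, G (arrival θ (i+1) ω) ∂P) * ∫⁻ ω, H (σN i ω) ∂P := by
            rw [show (∫⁻ ω, G (arrival θ (i+1) ω) * H (σN i ω) ∂P)
              = ∫⁻ ω, ((fun ω => G (arrival θ (i+1) ω)) * fun ω => H (σN i ω)) ω ∂P from rfl]
            exact hfact
        _ = DEN i * c (N - i) := by rw [hHint, hDEN_def]
    -- DEN i ≤ DEN 0 * c i
    have hDEN0 : ∀ i : ℕ, DEN i ≤ DEN 0 * c i := by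
      intro i
      set σ1 : Ω → ℝ := fun ω => ∑ k ∈ Finset.Ico 1 (i+1), θ k ω with hσ1_def
      have hσ1_meas : Measurable σ1 := Finset.measurable_sum _ fun k _ => measθ k
      have hσ1_nonneg : ∀ ω, 0 ≤ σ1 ω := fun ω =>
        Finset.sum_nonneg fun k _ => (posθ k ω).le
      have hpt : ∀ ω, G (arrival θ (i+1) ω) ≤ G (arrival θ 1 ω) * H (σ1 ω) := by
        intro ω
        by_cases hω : arrival θ (i+1) ω ≤ t
        · have hsplit : arrival θ 1 ω + σ1 ω = arrival θ (i+1) ω := by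
            show (∑ k ∈ Finset.range 1, θ k ω) + (∑ k ∈ Finset.Ico 1 (i+1), θ k ω)
              = ∑ k ∈ Finset.range (i+1), θ k ω
            simp only [Finset.range_eq_Ico]
            exact Finset.sum_Ico_consecutive _ (by omega) (by omega)
          have h1 : arrival θ 1 ω ≤ t := by
            have := hσ1_nonneg ω
            linarith
          have hσ1T : σ1 ω ≤ T := by
            have := harr_nonneg 1 ω
            linarith
          have hGle : g (arrival θ (i+1) ω) ≤ g (arrival θ 1 ω) := by
            apply hg_anti
            have := hσ1_nonneg ω
            linarith
          rw [hG_def, hH_def]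
          simp only [Set.indicator_of_mem (Set.mem_Iic.2 hω),
            Set.indicator_of_mem (Set.mem_Iic.2 h1),
            Set.indicator_of_mem (Set.mem_Iic.2 hσ1T), mul_one]
          exact hGle
        · rw [hG_def]
          simp only [Set.indicator_of_notMem (fun hh => hω (Set.mem_Iic.1 hh))]
          exact zero_le
      have hiτσ : IndepFun (arrival θ 1) σ1 P := by
        have hd : Disjoint (Finset.range 1) (Finset.Ico 1 (i+1)) := by
          rw [Finset.disjoint_left]
          intro a ha hb
          simp only [Finset.mem_range] at ha
          simp only [Finset.mem_Ico] at hb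
          omega
        exact indepFun_finsetSum_finsetSum measθ iidθ hd
      have hfact := lintegral_mul_eq_lintegral_mul_lintegral_of_indepFun
        (hG_meas.comp (harr 1)) (hH_meas.comp hσ1_meas)
        (hiτσ.comp hG_meas hH_meas)
      have hHσ : ∀ ω, H (σ1 ω)
          = Set.indicator (σ1 ⁻¹' Set.Iic T) (fun _ => (1:ℝ≥0∞)) ω := by
        intro ω
        by_cases hω : σ1 ω ≤ T
        · rw [hH_def]
          simp only [Set.indicator_of_mem (Set.mem_Iic.2 hω),
            Set.indicator_of_mem (show ω ∈ σ1 ⁻¹' Set.Iic T from Set.mem_Iic.2 hω)]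
        · rw [hH_def]
          simp only [Set.indicator_of_notMem (fun hh => hω (Set.mem_Iic.1 hh)),
            Set.indicator_of_notMem
              (show ω ∉ σ1 ⁻¹' Set.Iic T from fun hh => hω (Set.mem_Iic.1 hh))]
      have hHint : (∫⁻ ω, H (σ1 ω) ∂P) = c i := by
        have e1 : (∫⁻ ω, H (σ1 ω) ∂P) = P (σ1 ⁻¹' Set.Iic T) := by
          rw [lintegral_congr hHσ]
          exact lintegral_indicator_one (hσ1_meas measurableSet_Iic)
        rw [e1]
        have h1 : σ1 = fun ω => ∑ k ∈ Finset.Ico 1 (1 + i), θ k ω := by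
          funext ω
          show (∑ k ∈ Finset.Ico 1 (i+1), θ k ω) = _
          rw [show 1 + i = i + 1 by omega]
        have h2 : P (σ1 ⁻¹' Set.Iic T) = (P.map σ1) (Set.Iic T) :=
          (Measure.map_apply hσ1_meas measurableSet_Iic).symm
        rw [h2, h1, map_block_sum measθ iidθ distθ i 1,
          Measure.map_apply (harr i) measurableSet_Iic]
        rfl
      calc DEN i = ∫⁻ ω, G (arrival θ (i+1) ω) ∂P := by rw [hDEN_def]
        _ ≤ ∫⁻ ω, G (arrival θ 1 ω) * H (σ1 ω) ∂P := lintegral_mono hpt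
        _ = (∫⁻ ω, G (arrival θ 1 ω) ∂P) * ∫⁻ ω, H (σ1 ω) ∂P := by
            rw [show (∫⁻ ω, G (arrival θ 1 ω) * H (σ1 ω) ∂P)
              = ∫⁻ ω, ((fun ω => G (arrival θ 1 ω)) * fun ω => H (σ1 ω)) ω ∂P from rfl]
            exact hfact
        _ = DEN 0 * c i := by
            rw [hHint, hDEN_def]
    -- assembling the ENNReal bound
    have hsum_bound : (∑' i, DEN i * c (N-i)) ≤ (c m + εE (N-m)) * SDEN := by
      have hpt : ∀ i, DEN i * c (N-i) ≤ (if i ≤ N-m then DEN i * c m else 0)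
          + (if N-m < i then DEN 0 * c i else 0) := by
        intro i
        by_cases hi : i ≤ N-m
        · rw [if_pos hi, if_neg (by omega), add_zero]
          exact mul_le_mul_right (hc_anti (by omega)) _
        · rw [if_neg hi, if_pos (by omega), zero_add]
          calc DEN i * c (N-i) ≤ DEN i * 1 := mul_le_mul_right (hc1 _) _
            _ = DEN i := mul_one _
            _ ≤ DEN 0 * c i := hDEN0 i
      calc (∑' i, DEN i * c (N-i))
          ≤ ∑' i, ((if i ≤ N-m then DEN i * c m else 0)
            + (if N-m < i then DEN 0 * c i else 0)) := ENNReal.tsum_le_tsum hpt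
        _ = (∑' i, (if i ≤ N-m then DEN i * c m else 0))
            + ∑' i, (if N-m < i then DEN 0 * c i else 0) := ENNReal.tsum_add
        _ ≤ (∑' i, DEN i * c m) + ∑' i, DEN 0 * (if N-m < i then c i else 0) := by
            refine add_le_add (ENNReal.tsum_le_tsum fun i => ?_)
              (le_of_eq (tsum_congr fun i => by split <;> simp))
            split
            · exact le_rfl
            · exact zero_le
        _ = SDEN * c m + DEN 0 * ∑' i, (if N-m < i then c i else 0) := by
            rw [ENNReal.tsum_mul_right, ENNReal.tsum_mul_left, hSDEN_def]
        _ = SDEN * c m + DEN 0 * εE (N-m+1) := by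
            rw [tsum_ite_tail c (N-m), hεE_def]
        _ ≤ SDEN * c m + SDEN * εE (N-m) := by
            refine add_le_add le_rfl (mul_le_mul' (ENNReal.le_tsum 0) ?_)
            rw [hεE_def]
            exact ENNReal.tsum_le_tsum fun j => hc_anti (by omega)
        _ = (c m + εE (N-m)) * SDEN := by ring
    have hmain : NUM0 ≤ (c m + εE (N-m)) * SDEN := by
      rw [hswap]
      calc (∑' i, ∑' k, (if i < N+1+k then P (E i ∩ B k) else 0))
          ≤ ∑' i, Q i := ENNReal.tsum_le_tsum hQ_bound
        _ = ∑' i, DEN i * c (N-i) := tsum_congr hQ_eq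
        _ ≤ (c m + εE (N-m)) * SDEN := hsum_bound
    -- conclude in the reals
    rw [hnum, hterm1]
    have hK_ne : c m + εE (N - m) ≠ ⊤ := ENNReal.add_ne_top.2 ⟨hc_ne m, hεE_ne _⟩
    by_cases h0 : SDEN = 0
    · have hN0 : NUM0 = 0 := by
        refine le_antisymm ?_ (zero_le)
        calc NUM0 ≤ (c m + εE (N-m)) * SDEN := hmain
          _ = 0 := by rw [h0, mul_zero]
      rw [hN0, h0]
      simp only [ENNReal.toReal_zero, zero_div]
      exact add_nonneg ENNReal.toReal_nonneg ENNReal.toReal_nonneg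
    · have hpos : 0 < SDEN.toReal := ENNReal.toReal_pos h0 hSDEN_ne
      rw [div_le_iff₀ hpos]
      have h1 : NUM0.toReal ≤ ((c m + εE (N-m)) * SDEN).toReal :=
        ENNReal.toReal_mono (ENNReal.mul_ne_top hK_ne hSDEN_ne) hmain
      rw [ENNReal.toReal_mul, ENNReal.toReal_add (hc_ne m) (hεE_ne _)] at h1
      exact h1
  -- pass to the limit
  rw [Metric.tendsto_atTop]
  intro ε hε
  have hev : ∀ᶠ M in atTop, (εE M).toReal < ε/2 :=
    hεE_to.eventually_lt_const (half_pos hε)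
  obtain ⟨M₀, hM₀⟩ := Filter.eventually_atTop.1 hev
  refine ⟨M₀ + M₀, fun N hN => ?_⟩
  have hbnd_nonneg : (0:ℝ) ≤ (c M₀).toReal + (εE (N - M₀)).toReal :=
    add_nonneg ENNReal.toReal_nonneg ENNReal.toReal_nonneg
  have hbnd_lt : (c M₀).toReal + (εE (N - M₀)).toReal < ε := by
    have h1 : (c M₀).toReal < ε/2 :=
      lt_of_le_of_lt (ENNReal.toReal_mono (hεE_ne M₀) (hc_le_εE M₀)) (hM₀ M₀ le_rfl)
    have h2 : (εE (N - M₀)).toReal < ε/2 := hM₀ _ (by omega)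
    linarith
  have hkey : ∀ (t' : {t : ℝ // t ∈ Set.Icc 0 T ∧ 0 < renewalFn P θ t})
      (x' : {x : ℝ // 0 ≤ x}),
      (∑' k : ℕ, ∑ i ∈ Finset.range (N + 1 + k),
          (P {ω | Real.exp (-(r * arrival θ (i + 1) ω)) • Z i ω ∈ x'.1 • A ∧
              Ncount θ t'.1 ω = N + 1 + k}).toReal) / term1 P V A θ r x'.1 t'.1
        ≤ (c M₀).toReal + (εE (N - M₀)).toReal :=
    fun t' x' => key M₀ N (by omega) t'.1 t'.2.1 x'.1 x'.2
  have hsupx : ∀ t' : {t : ℝ // t ∈ Set.Icc 0 T ∧ 0 < renewalFn P θ t},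
      (⨆ x' : {x : ℝ // 0 ≤ x},
        (∑' k : ℕ, ∑ i ∈ Finset.range (N + 1 + k),
            (P {ω | Real.exp (-(r * arrival θ (i + 1) ω)) • Z i ω ∈ x'.1 • A ∧
                Ncount θ t'.1 ω = N + 1 + k}).toReal) / term1 P V A θ r x'.1 t'.1)
      ≤ (c M₀).toReal + (εE (N - M₀)).toReal :=
    fun t' => Real.iSup_le (fun x' => hkey t' x') hbnd_nonneg
  have hsup_le : (⨆ t' : {t : ℝ // t ∈ Set.Icc 0 T ∧ 0 < renewalFn P θ t},
      ⨆ x' : {x : ℝ // 0 ≤ x},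
        (∑' k : ℕ, ∑ i ∈ Finset.range (N + 1 + k),
            (P {ω | Real.exp (-(r * arrival θ (i + 1) ω)) • Z i ω ∈ x'.1 • A ∧
                Ncount θ t'.1 ω = N + 1 + k}).toReal) / term1 P V A θ r x'.1 t'.1)
      ≤ (c M₀).toReal + (εE (N - M₀)).toReal :=
    Real.iSup_le hsupx hbnd_nonneg
  have hnn : (0:ℝ) ≤ ⨆ t' : {t : ℝ // t ∈ Set.Icc 0 T ∧ 0 < renewalFn P θ t},
      ⨆ x' : {x : ℝ // 0 ≤ x},
        (∑' k : ℕ, ∑ i ∈ Finset.range (N + 1 + k),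
            (P {ω | Real.exp (-(r * arrival θ (i + 1) ω)) • Z i ω ∈ x'.1 • A ∧
                Ncount θ t'.1 ω = N + 1 + k}).toReal) / term1 P V A θ r x'.1 t'.1 := by
    have hval : ∀ (t' : {t : ℝ // t ∈ Set.Icc 0 T ∧ 0 < renewalFn P θ t})
        (x' : {x : ℝ // 0 ≤ x}), (0:ℝ) ≤
        (∑' k : ℕ, ∑ i ∈ Finset.range (N + 1 + k),
            (P {ω | Real.exp (-(r * arrival θ (i + 1) ω)) • Z i ω ∈ x'.1 • A ∧
                Ncount θ t'.1 ω = N + 1 + k}).toReal) / term1 P V A θ r x'.1 t'.1 := by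
      intro t' x'
      apply div_nonneg
      · exact tsum_nonneg fun k => Finset.sum_nonneg fun i _ => ENNReal.toReal_nonneg
      · rw [term1]
        refine tsum_nonneg fun i => integral_nonneg fun ω => ?_
        exact Set.indicator_nonneg (fun _ _ => ENNReal.toReal_nonneg) ω
    set t₀ : {t : ℝ // t ∈ Set.Icc 0 T ∧ 0 < renewalFn P θ t} :=
      ⟨T, ⟨⟨hT0.le, le_rfl⟩, hT⟩⟩ with ht₀
    set x₀ : {x : ℝ // 0 ≤ x} := ⟨0, le_rfl⟩ with hx₀
    have hbdd_x : BddAbove (Set.range fun x' : {x : ℝ // 0 ≤ x} =>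
        (∑' k : ℕ, ∑ i ∈ Finset.range (N + 1 + k),
            (P {ω | Real.exp (-(r * arrival θ (i + 1) ω)) • Z i ω ∈ x'.1 • A ∧
                Ncount θ t₀.1 ω = N + 1 + k}).toReal) / term1 P V A θ r x'.1 t₀.1) :=
      ⟨(c M₀).toReal + (εE (N - M₀)).toReal, by
        rintro y ⟨x', rfl⟩
        exact hkey t₀ x'⟩
    have hbdd_t : BddAbove (Set.range fun t' : {t : ℝ // t ∈ Set.Icc 0 T ∧ 0 < renewalFn P θ t} =>
        ⨆ x' : {x : ℝ // 0 ≤ x},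
        (∑' k : ℕ, ∑ i ∈ Finset.range (N + 1 + k),
            (P {ω | Real.exp (-(r * arrival θ (i + 1) ω)) • Z i ω ∈ x'.1 • A ∧
                Ncount θ t'.1 ω = N + 1 + k}).toReal) / term1 P V A θ r x'.1 t'.1) :=
      ⟨(c M₀).toReal + (εE (N - M₀)).toReal, by
        rintro y ⟨t', rfl⟩
        exact hsupx t'⟩
    calc (0:ℝ) ≤ _ := hval t₀ x₀
      _ ≤ ⨆ x' : {x : ℝ // 0 ≤ x},
          (∑' k : ℕ, ∑ i ∈ Finset.range (N + 1 + k),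
              (P {ω | Real.exp (-(r * arrival θ (i + 1) ω)) • Z i ω ∈ x'.1 • A ∧
                  Ncount θ t₀.1 ω = N + 1 + k}).toReal) / term1 P V A θ r x'.1 t₀.1 :=
        le_ciSup hbdd_x x₀
      _ ≤ _ := le_ciSup hbdd_t t₀
  rw [Real.dist_0_eq_abs, abs_of_nonneg hnn]
  exact lt_of_le_of_lt hsup_le hbnd_lt
end
end
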